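/- arXiv:1410.1219 — 11 statements merged into one kernel-verified Lean document; each statement's English description precedes it below -/
import Mathlib

section
/- Every hypergraph H satisfies χ_cf(H) ≤ Δ(H) + 1, where χ_cf is the conflict-free chromatic number and Δ is the maximum vertex degree. -/
/-- The degree of a vertex: the number of hyperedges containing it. -/
def hypDeg {V : Type} [DecidableEq V] (E : Finset (Finset V)) (v : V) : ℕ :=
  (E.filter (fun e => v ∈ e)).card

/-- A coloring is conflict-free if every hyperedge contains a vertex whose
color appears on no other vertex of that edge. -/
def ConflictFree {V α : Type} (E : Finset (Finset V)) (c : V → α) : Prop :=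
  ∀ e ∈ E, ∃ v ∈ e, ∀ w ∈ e, c w = c v → w = v

/-!
Induction on the maximum degree. Take a set `S` of vertices, maximal among sets meeting every
hyperedge in at most one vertex, and give `S` a new colour: each edge meeting `S` then has a
unique vertex of that colour. By maximality every vertex of positive degree lies in an edge
meeting `S`, so deleting the edges that meet `S` lowers every positive degree, and the remaining
edges are coloured by induction.
-/

open Finset

variable {V : Type} [DecidableEq V]

lemma hypDeg_pos {E : Finset (Finset V)} {e : Finset V} {v : V} (he : e ∈ E) (hv : v ∈ e) :
    0 < hypDeg E v :=
  card_pos.mpr ⟨e, mem_filter.mpr ⟨he, hv⟩⟩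

def MeetsEachAtMostOnce (E : Finset (Finset V)) (S : Finset V) : Prop :=
  ∀ e ∈ E, #(e ∩ S) ≤ 1

lemma MeetsEachAtMostOnce.insert {E : Finset (Finset V)} {S : Finset V} {v : V}
    (hS : MeetsEachAtMostOnce E S) (hv : ∀ e ∈ E, v ∈ e → Disjoint e S) :
    MeetsEachAtMostOnce E (insert v S) := by
  intro e he
  by_cases hve : v ∈ e
  · rw [inter_insert_of_mem hve, disjoint_iff_inter_eq_empty.mp (hv e he hve)]
    simp
  · rw [inter_insert_of_notMem hve]
    exact hS e he

lemma exists_maximal_meetsEachAtMostOnce (E : Finset (Finset V)) :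
    ∃ S, MeetsEachAtMostOnce E S ∧
      ∀ e ∈ E, ∀ v ∈ e, ∃ e' ∈ E, v ∈ e' ∧ ¬Disjoint e' S := by
  classical
  set U := E.sup id
  obtain ⟨S, hSmax⟩ := (U.powerset.filter (MeetsEachAtMostOnce E)).exists_maximal
    ⟨∅, mem_filter.mpr ⟨empty_mem_powerset U, fun e _ => by simp⟩⟩
  obtain ⟨hSU, hS⟩ := mem_filter.mp hSmax.1
  refine ⟨S, hS, fun e he v hve => ?_⟩
  by_cases hvS : v ∈ S
  · exact ⟨e, he, hve, not_disjoint_iff.mpr ⟨v, hve, hvS⟩⟩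
  by_contra! hdisj
  have hins : insert v S ∈ U.powerset.filter (MeetsEachAtMostOnce E) :=
    mem_filter.mpr ⟨mem_powerset.mpr (insert_subset (le_sup (f := id) he hve)
      (mem_powerset.mp hSU)), hS.insert hdisj⟩
  exact hvS (hSmax.2 hins (subset_insert v S) (mem_insert_self v S))

lemma hypDeg_filter_disjoint_le {E : Finset (Finset V)} {S : Finset V}
    (hcover : ∀ e ∈ E, ∀ v ∈ e, ∃ e' ∈ E, v ∈ e' ∧ ¬Disjoint e' S) (v : V) :
    hypDeg (E.filter (Disjoint · S)) v ≤ hypDeg E v - 1 := by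
  have hsub : (E.filter (Disjoint · S)).filter (v ∈ ·) = (E.filter (v ∈ ·)).filter (Disjoint · S) :=
    filter_comm _ _ _
  rcases Nat.eq_zero_or_pos (hypDeg E v) with h0 | hpos
  · have hle : hypDeg (E.filter (Disjoint · S)) v ≤ hypDeg E v := by
      rw [hypDeg, hsub]
      exact card_filter_le _ _
    omega
  · obtain ⟨e, he⟩ := card_pos.mp hpos
    obtain ⟨e', he', hve', hmeet⟩ := hcover e (mem_filter.mp he).1 v (mem_filter.mp he).2
    have hlt : hypDeg (E.filter (Disjoint · S)) v < hypDeg E v := by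
      rw [hypDeg, hsub]
      exact card_lt_card (filter_ssubset.mpr ⟨e', mem_filter.mpr ⟨he', hve'⟩, hmeet⟩)
    omega

lemma ConflictFree.extend {E : Finset (Finset V)} {S : Finset V} {n : ℕ} {c : V → Fin (n + 1)}
    (hS : MeetsEachAtMostOnce E S) (hc : ConflictFree (E.filter (Disjoint · S)) c) :
    ConflictFree E (fun v => if v ∈ S then Fin.last (n + 1) else (c v).castSucc) := by
  intro e he
  by_cases hdis : Disjoint e S
  · obtain ⟨v, hv, huniq⟩ := hc e (mem_filter.mpr ⟨he, hdis⟩)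
    refine ⟨v, hv, fun w hw hcw => huniq w hw ?_⟩
    simpa [disjoint_left.mp hdis hw, disjoint_left.mp hdis hv] using hcw
  · obtain ⟨s, hs⟩ := not_disjoint_iff_nonempty_inter.mp hdis
    refine ⟨s, (mem_inter.mp hs).1, fun w hw hcw => ?_⟩
    have hwS : w ∈ S := by
      by_contra hwS
      simp [hwS, (mem_inter.mp hs).2, Fin.castSucc_ne_last] at hcw
    exact card_le_one.mp (hS e he) w (mem_inter.mpr ⟨hw, hwS⟩) s hs

theorem exists_conflictFree_fin_of_hypDeg_le {E : Finset (Finset V)}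
    (hne : ∀ e ∈ E, e.Nonempty) (n : ℕ) (hdeg : ∀ v, hypDeg E v ≤ n) :
    ∃ c : V → Fin (n + 1), ConflictFree E c := by
  induction n generalizing E with
  | zero =>
    refine ⟨0, fun e he => ?_⟩
    obtain ⟨v, hv⟩ := hne e he
    exact absurd (hdeg v) (hypDeg_pos he hv).not_ge
  | succ n ih =>
    obtain ⟨S, hS, hcover⟩ := exists_maximal_meetsEachAtMostOnce E
    obtain ⟨c, hc⟩ := ih (fun e he => hne e (mem_filter.mp he).1)
      fun v => (hypDeg_filter_disjoint_le hcover v).trans (by have := hdeg v; omega)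
    exact ⟨_, hc.extend hS⟩

/-- Every hypergraph `H` (with nonempty hyperedges) satisfies
`χ_cf(H) ≤ Δ(H) + 1`. -/
theorem chiCF_le_maxDeg_add_one {V : Type} [Fintype V] [DecidableEq V]
    (E : Finset (Finset V)) (hne : ∀ e ∈ E, e.Nonempty) :
    ∃ c : V → Fin (Finset.univ.sup (hypDeg E) + 1), ConflictFree E c :=
  exists_conflictFree_fin_of_hypDeg_le hne _ fun v => le_sup (mem_univ v)
end

section
/- Let H be a 2-regular r-uniform hypergraph and let G be its dual graph (an r-regular multigraph whose vertices are the hyperedges of H and whose edges correspond to vertices of H, joining the two hyperedges containing that vertex). Then χ_cf(H) = 2 if and only if G has a {1, r−1}-factor. -/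
/-- The conflict-free chromatic number. -/
noncomputable def chiCF (V : Type) (E : Finset (Finset V)) : ℕ :=
  sInf {k : ℕ | ∃ c : V → Fin k, ConflictFree E c}

open Finset

section ConflictFree

variable {V α β : Type} {E : Finset (Finset V)} {c : V → α}

theorem conflictFree_iff_exists_card_filter_eq_one [DecidableEq α] :
    ConflictFree E c ↔ ∀ e ∈ E, ∃ a, (e.filter (c · = a)).card = 1 := by
  refine forall₂_congr fun e _ => ⟨fun ⟨v, hv, huniq⟩ => ⟨c v, ?_⟩, fun ⟨a, ha⟩ => ?_⟩
  · exact card_eq_one.2 ⟨v, eq_singleton_iff_unique_mem.2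
      ⟨mem_filter.2 ⟨hv, rfl⟩, fun w hw => huniq w (mem_filter.1 hw).1 (mem_filter.1 hw).2⟩⟩
  · obtain ⟨v, hv⟩ := card_eq_one.1 ha
    have hmem (w : V) : w ∈ e ∧ c w = a ↔ w = v := by
      simpa using Finset.ext_iff.1 hv w
    obtain ⟨hve, hva⟩ := (hmem v).2 rfl
    exact ⟨v, hve, fun w hw hwv => (hmem w).1 ⟨hw, hwv.trans hva⟩⟩

theorem ConflictFree.comp_injective (hc : ConflictFree E c) {f : α → β} (hf : f.Injective) :
    ConflictFree E (f ∘ c) := fun e he => by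
  obtain ⟨v, hv, huniq⟩ := hc e he
  exact ⟨v, hv, fun w hw hwv => huniq w hw (hf hwv)⟩

theorem ConflictFree.eq_singleton [Subsingleton α] (hc : ConflictFree E c) {e : Finset V}
    (he : e ∈ E) {v : V} (hv : v ∈ e) : e = {v} := by
  obtain ⟨u, -, huniq⟩ := hc e he
  exact eq_singleton_iff_unique_mem.2
    ⟨hv, fun w hw => (huniq w hw (Subsingleton.elim _ _)).trans
      (huniq v hv (Subsingleton.elim _ _)).symm⟩

theorem ConflictFree.hypDeg_le_one [DecidableEq V] [Subsingleton α] (hc : ConflictFree E c)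
    (v : V) : hypDeg E v ≤ 1 :=
  card_le_one.2 fun e he e' he' => by
    rw [mem_filter] at he he'
    rw [hc.eq_singleton he.1 he.2, hc.eq_singleton he'.1 he'.2]

theorem conflictFree_fin_two_iff [DecidableEq V] {c : V → Fin 2} {F : Finset V}
    (hF : ∀ v, v ∈ F ↔ c v = 0) :
    ConflictFree E c ↔ ∀ e ∈ E, (e ∩ F).card = 1 ∨ (e \ F).card = 1 := by
  have hclass0 (e : Finset V) : e.filter (c · = 0) = e ∩ F := by
    ext v; simp [hF]
  have hclass1 (e : Finset V) : e.filter (c · = 1) = e \ F := by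
    ext v
    simp only [mem_filter, mem_sdiff, hF]
    exact and_congr_right fun _ => by omega
  simp only [conflictFree_iff_exists_card_filter_eq_one, Fin.exists_fin_two, hclass0, hclass1]

end ConflictFree

theorem card_sdiff_eq_one_iff_card_inter {V : Type} [DecidableEq V] {e : Finset V}
    (he : e.Nonempty) (F : Finset V) : (e \ F).card = 1 ↔ (e ∩ F).card = e.card - 1 := by
  have := card_sdiff_add_card_inter e F
  have := he.card_pos
  omega

theorem exists_conflictFree_fin_two_iff {V : Type} [Fintype V] [DecidableEq V] {r : ℕ}
    (hr : 0 < r) {E : Finset (Finset V)} (huniform : ∀ e ∈ E, e.card = r) :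
    (∃ c : V → Fin 2, ConflictFree E c) ↔
      ∃ F : Finset V, ∀ e ∈ E, (e ∩ F).card = 1 ∨ (e ∩ F).card = r - 1 := by
  have hfactor (F : Finset V) :
      (∀ e ∈ E, (e ∩ F).card = 1 ∨ (e \ F).card = 1) ↔
        ∀ e ∈ E, (e ∩ F).card = 1 ∨ (e ∩ F).card = r - 1 := by
    refine forall₂_congr fun e he => or_congr_right ?_
    rw [card_sdiff_eq_one_iff_card_inter (card_pos.1 (huniform e he ▸ hr)), huniform e he]
  constructor
  · rintro ⟨c, hc⟩
    exact ⟨univ.filter (c · = 0),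
      (hfactor _).1 ((conflictFree_fin_two_iff (by simp)).1 hc)⟩
  · rintro ⟨F, hF⟩
    refine ⟨fun v => if v ∈ F then 0 else 1, (conflictFree_fin_two_iff fun v => ?_).2
      ((hfactor F).2 hF)⟩
    split_ifs with hv <;> simp [hv]

/-- Let `H` be a 2-regular `r`-uniform hypergraph and `G` its dual `r`-regular
multigraph (vertices of `G` are the hyperedges of `H`, edges of `G` are the
vertices of `H`).  A `{1, r-1}`-factor of `G` is a set `F` of edges of `G`,
i.e. a set of vertices of `H`, such that each vertex of `G` (each hyperedge
`e` of `H`) is incident with exactly `1` or exactly `r - 1` edges of `F`,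
i.e. `(e ∩ F).card ∈ {1, r-1}`.  Then `χ_cf(H) = 2` iff `G` has a
`{1, r-1}`-factor. -/
theorem chiCF_eq_two_iff_dual_factor {V : Type} [Fintype V] [DecidableEq V] [Nonempty V]
    (r : ℕ) (E : Finset (Finset V))
    (huniform : ∀ e ∈ E, e.card = r)
    (hregular : ∀ v : V, hypDeg E v = 2) :
    chiCF V E = 2 ↔ ∃ F : Finset V, ∀ e ∈ E, (e ∩ F).card = 1 ∨ (e ∩ F).card = r - 1 := by
  obtain ⟨v⟩ := ‹Nonempty V›
  obtain ⟨e, he, hve⟩ : ∃ e ∈ E, v ∈ e :=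
    filter_nonempty_iff.1 (card_pos.1 (by rw [← hypDeg, hregular v]; norm_num))
  have hr : 0 < r := huniform e he ▸ card_pos.2 ⟨v, hve⟩
  have hupward : ∀ k₁ k₂ : ℕ, k₁ ≤ k₂ → (∃ c : V → Fin k₁, ConflictFree E c) →
      ∃ c : V → Fin k₂, ConflictFree E c :=
    fun _ _ hk ⟨c, hc⟩ => ⟨_, hc.comp_injective (Fin.castLE_injective hk)⟩
  have hno_one : ¬ ∃ c : V → Fin 1, ConflictFree E c := fun ⟨_, hc⟩ => by
    have := hc.hypDeg_le_one v
    rw [hregular v] at this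
    omega
  exact (Nat.sInf_upward_closed_eq_succ_iff hupward 1).trans
    ((and_iff_left hno_one).trans (exists_conflictFree_fin_two_iff hr huniform))
end

section
/- In any conflict-free 2-coloring of a 2-regular r-uniform hypergraph H, the set of edges of the dual r-regular graph G corresponding to vertices of one color class forms a {1, r−1}-factor of G. -/
/-! A conflict-free edge has a vertex `v` whose colour class in the edge is `{v}`. With only two
colours, the class of the other colour is then everything but `v`, so every colour class of the
edge has size `1` or `r - 1`. -/

section UniqueColor

variable {V α : Type} {s : Finset V} {c : V → α} {v : V}

lemma filter_color_eq_singleton [DecidableEq α] (hv : v ∈ s)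
    (huniq : ∀ w ∈ s, c w = c v → w = v) :
    s.filter (fun w => c w = c v) = {v} :=
  Finset.eq_singleton_iff_unique_mem.mpr
    ⟨Finset.mem_filter.mpr ⟨hv, rfl⟩, fun w hw => huniq w (Finset.mem_filter.mp hw).1
      (Finset.mem_filter.mp hw).2⟩

lemma card_filter_color_ne [DecidableEq α] (hv : v ∈ s)
    (huniq : ∀ w ∈ s, c w = c v → w = v) :
    (s.filter (fun w => c w ≠ c v)).card = s.card - 1 := by
  have hsplit := Finset.card_filter_add_card_filter_not (s := s) (fun w => c w = c v)
  rw [filter_color_eq_singleton hv huniq, Finset.card_singleton] at hsplit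
  simp only [ne_eq]
  omega

lemma card_filter_color_eq_one_or_card_sub_one {c : V → Fin 2} (hv : v ∈ s)
    (huniq : ∀ w ∈ s, c w = c v → w = v) (i : Fin 2) :
    (s.filter (fun w => c w = i)).card = 1 ∨
      (s.filter (fun w => c w = i)).card = s.card - 1 := by
  by_cases hi : c v = i
  · subst hi
    exact .inl (by rw [filter_color_eq_singleton hv huniq, Finset.card_singleton])
  · have hother : ∀ w, c w = i ↔ c w ≠ c v := by omega
    simp only [hother]
    exact .inr (card_filter_color_ne hv huniq)

end UniqueColor

theorem colorClass_is_factor_general {V : Type}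
    (r : ℕ) (E : Finset (Finset V))
    (huniform : ∀ e ∈ E, e.card = r)
    (c : V → Fin 2) (hc : ConflictFree E c) :
    ∀ e ∈ E, (e.filter (fun v => c v = 0)).card = 1 ∨
      (e.filter (fun v => c v = 0)).card = r - 1 := by
  intro e he
  obtain ⟨v, hv, huniq⟩ := hc e he
  rw [← huniform e he]
  exact card_filter_color_eq_one_or_card_sub_one hv huniq 0

/-- In any conflict-free 2-coloring of a 2-regular `r`-uniform hypergraph `H`,
the set of edges of the dual `r`-regular graph `G` corresponding to the
vertices of one color class forms a `{1, r-1}`-factor of `G`: in dual terms,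
every hyperedge `e` contains exactly `1` or exactly `r - 1` vertices of that
color class. -/
theorem colorClass_is_factor {V : Type} [Fintype V] [DecidableEq V]
    (r : ℕ) (E : Finset (Finset V))
    (huniform : ∀ e ∈ E, e.card = r)
    (hregular : ∀ v : V, hypDeg E v = 2)
    (c : V → Fin 2) (hc : ConflictFree E c) :
    ∀ e ∈ E, (e.filter (fun v => c v = 0)).card = 1 ∨
      (e.filter (fun v => c v = 0)).card = r - 1 :=
  colorClass_is_factor_general r E huniform c hc
end

section
/- For every odd positive integer t and every integer r with r even or r ≥ (t+1)(t+2), there exists an r-regular graph with no {t, r−t}-factor. -/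
/-!
For even `r` the complete graph on `r + 1` vertices works: `t` and `r - t` are both odd, and a graph
on an odd number of vertices cannot have all its degrees odd.

For odd `r > (t + 1)(t + 2)` write `r - 1 = K₀ + ⋯ + K_t` with odd parts `K_j ≥ t + 2`. A block with
parameter `K` has vertices `p_x` (`x < r`) and `q_*, q_x` (`x < r`), with `p_x q_y` an edge unless
`y = x`; the `q_x` with `x < K` are joined to an outside root `w`, and the other `q_x` are paired off
by a matching. Two copies of a root with `t + 1` blocks, joined by an edge between the two roots,
form an `r`-regular graph. In a `{t, r - t}`-factor let `f` be the number of its edges between a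
block and `w` and `m` the number of its matching edges. Comparing the degree sums over the `q`'s and
over the `p`'s gives `2m + f ≡ t (mod r - 2t)`; as `0 ≤ 2m + f ≤ r`, this forces `2m + f ∈ {t, r - t}`
and then, by parity, `1 ≤ f ≤ K - 1`. Summing over the blocks, the factor degree of the root lies
between `t + 1` and `r - t - 1`, which is impossible.
-/

noncomputable def gdeg {W : Type} (G : SimpleGraph W) (v : W) : ℕ :=
  {w | G.Adj v w}.ncard

open Finset SimpleGraph

def IsFactorWithDegrees {W : Type} (G F : SimpleGraph W) (a b : ℤ) : Prop :=
  F ≤ G ∧ ∀ v, (gdeg F v : ℤ) = a ∨ (gdeg F v : ℤ) = b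

lemma gdeg_eq_card_of_adj_iff {W : Type} {G : SimpleGraph W} {v : W} (s : Finset W)
    (h : ∀ u, G.Adj v u ↔ u ∈ s) : gdeg G v = #s := by
  rw [gdeg, ← Set.ncard_coe_finset]
  exact congrArg _ (Set.ext h)

lemma gdeg_eq_degree {W : Type} [Fintype W] (G : SimpleGraph W) [DecidableRel G.Adj] (v : W) :
    gdeg G v = G.degree v :=
  gdeg_eq_card_of_adj_iff _ fun _ => (mem_neighborFinset _ _ _).symm

lemma gdeg_iso {V W : Type} {G : SimpleGraph V} {H : SimpleGraph W} (e : G ≃g H) (v : V) :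
    gdeg H (e v) = gdeg G v := by
  rw [gdeg, gdeg, ← Set.ncard_image_of_injective _ e.injective]
  congr 1
  ext w
  obtain ⟨u, rfl⟩ := e.surjective w
  simp [e.injective.eq_iff, e.map_adj_iff]

lemma IsFactorWithDegrees.comap_iso {V W : Type} {G : SimpleGraph V} {H F : SimpleGraph W}
    (e : G ≃g H) {a b : ℤ} (hF : IsFactorWithDegrees H F a b) :
    IsFactorWithDegrees G (F.comap e) a b := by
  refine ⟨fun u v huv => e.map_adj_iff.1 (hF.1 huv), fun v => ?_⟩
  convert hF.2 (e v) using 2 <;> exact congrArg _ (gdeg_iso (Iso.comap e.toEquiv F) v).symm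

lemma exists_fin_of_regular_of_not_factor {W : Type} [Fintype W] (G : SimpleGraph W) (r : ℕ)
    {a b : ℤ} (hreg : ∀ v, gdeg G v = r) (hnf : ¬ ∃ F, IsFactorWithDegrees G F a b) :
    ∃ (n : ℕ) (G' : SimpleGraph (Fin n)), (∀ v, gdeg G' v = r) ∧
      ¬ ∃ F, IsFactorWithDegrees G' F a b := by
  let e := Iso.map (Fintype.equivFin W) G
  refine ⟨_, _, fun v => ?_, fun ⟨F, hF⟩ => hnf ⟨_, hF.comap_iso e⟩⟩
  rw [← e.apply_symm_apply v, gdeg_iso]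
  exact hreg _

lemma gdeg_top (n : ℕ) (v : Fin (n + 1)) : gdeg (⊤ : SimpleGraph (Fin (n + 1))) v = n := by
  classical
  rw [gdeg_eq_degree, IsRegularOfDegree.top.degree_eq, Fintype.card_fin, Nat.add_sub_cancel]

lemma not_exists_factor_of_odd_card {W : Type} [Fintype W] (G : SimpleGraph W)
    (hW : Odd (Fintype.card W)) {a b : ℤ} (ha : Odd a) (hb : Odd b) :
    ¬ ∃ F, IsFactorWithDegrees G F a b := by
  classical
  rintro ⟨F, -, hdeg⟩
  have hodd : ∀ v, Odd (F.degree v) := fun v => by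
    rw [← gdeg_eq_degree, ← Int.odd_coe_nat]
    rcases hdeg v with h | h <;> rwa [h]
  have := F.even_card_odd_degree_vertices
  simp only [hodd, filter_true, card_univ] at this
  exact Nat.not_even_iff_odd.2 hW this

lemma sum_modEq_of_forall_eq_or_eq {α : Type} (s : Finset α) (g : α → ℤ) {a b : ℤ}
    (h : ∀ x ∈ s, g x = a ∨ g x = b) : ∑ x ∈ s, g x ≡ #s * a [ZMOD b - a] := by
  rw [← nsmul_eq_mul, ← sum_const]
  refine Int.ModEq.sum fun x hx => ?_
  rcases h x hx with h | h <;> rw [h]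
  exact (Int.modEq_iff_dvd.2 (by simp)).symm

lemma eq_or_eq_of_modEq {t r d : ℤ} (h : d ≡ t [ZMOD r - t - t]) (h0 : 0 ≤ d) (h1 : d ≤ r + 1)
    (hr : 3 * t + 1 < r) : d = t ∨ d = r - t := by
  obtain ⟨k, hk⟩ := Int.modEq_iff_dvd.1 h.symm
  rcases lt_trichotomy k 0 with hk0 | rfl | hk0
  · nlinarith
  · left; linarith
  · obtain rfl | hk1 : k = 1 ∨ 2 ≤ k := by omega
    · right; linarith
    · nlinarith

section DoubleCounting

variable {V : Type} [Fintype V] [DecidableEq V] (F : SimpleGraph V) [DecidableRel F.Adj]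

lemma neighborFinset_inter_eq_filter (v : V) (s : Finset V) :
    F.neighborFinset v ∩ s = s.filter (F.Adj v) := by
  ext; simp [and_comm]

lemma sum_card_neighborFinset_inter_comm (s t : Finset V) :
    ∑ v ∈ s, #(F.neighborFinset v ∩ t) = ∑ w ∈ t, #(F.neighborFinset w ∩ s) := by
  simp_rw [neighborFinset_inter_eq_filter, card_filter]
  rw [sum_comm]
  simp only [F.adj_comm]

lemma sum_degree_eq_add_sum_card_sdiff {P Q : Finset V}
    (hP : ∀ p ∈ P, F.neighborFinset p ⊆ Q) :
    ∑ q ∈ Q, F.degree q = ∑ p ∈ P, F.degree p + ∑ q ∈ Q, #(F.neighborFinset q \ P) := by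
  have hcross : ∑ q ∈ Q, #(F.neighborFinset q ∩ P) = ∑ p ∈ P, F.degree p := by
    rw [sum_card_neighborFinset_inter_comm]
    exact sum_congr rfl fun p hp => by
      rw [inter_eq_left.2 (hP p hp), card_neighborFinset_eq_degree]
  rw [← hcross, ← sum_add_distrib]
  exact sum_congr rfl fun q _ => (card_inter_add_card_sdiff _ _).symm

lemma even_sum_card_neighborFinset_inter (s : Finset V) :
    Even (∑ v ∈ s, #(F.neighborFinset v ∩ s)) := by
  -- Swapping the coordinates pairs up the ordered adjacent pairs in `s × s`.
  simp_rw [neighborFinset_inter_eq_filter, card_filter, ← ZMod.natCast_eq_zero_iff_even]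
  push_cast
  rw [← sum_product']
  refine sum_involution (fun x _ => x.swap) (fun x _ => ?_) (fun x _ => ?_)
    (fun x hx => by simpa [mem_product, and_comm] using hx) (fun x _ => rfl)
  · simp only [Prod.fst_swap, Prod.snd_swap, F.adj_comm x.2]
    split <;> decide
  · split
    · exact fun _ hx => ‹F.Adj x.1 x.2›.ne (congrArg Prod.fst hx).symm
    · simp

end DoubleCounting

/-- Pairs up `{k, k + 1}, {k + 2, k + 3}, …`. -/
def Paired (k x y : ℕ) : Prop := k ≤ x ∧ k ≤ y ∧ x ≠ y ∧ (x - k) / 2 = (y - k) / 2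

lemma Paired.symm {k x y : ℕ} (h : Paired k x y) : Paired k y x := by
  unfold Paired at *; omega

lemma not_paired_self (k x : ℕ) : ¬ Paired k x x := by
  unfold Paired; omega

lemma Paired.unique {k x y z : ℕ} (hy : Paired k x y) (hz : Paired k x z) : y = z := by
  unfold Paired at *; omega

lemma exists_paired {k x r : ℕ} (hk : k ≤ x) (hx : x < r) (hr : Even (r - k)) :
    ∃ y < r, Paired k x y := by
  obtain ⟨m, hm⟩ := hr
  unfold Paired
  refine ⟨if (x - k) % 2 = 0 then x + 1 else x - 1, ?_, ?_⟩ <;> split <;> omega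

namespace Gadget

abbrev Vert (ι : Type) (r : ℕ) := Bool × Option (ι × (Fin r ⊕ Option (Fin r)))

variable {ι : Type} {r : ℕ} (K : ι → ℕ)

def root (c : Bool) : Vert ι r := (c, none)
def pv (c : Bool) (j : ι) (x : Fin r) : Vert ι r := (c, some (j, .inl x))
def qv (c : Bool) (j : ι) (y : Option (Fin r)) : Vert ι r := (c, some (j, .inr y))

lemma pv_injective (c : Bool) (j : ι) : Function.Injective (pv (r := r) c j) :=
  fun _ _ h => by simpa [pv] using h

lemma qv_injective (c : Bool) (j : ι) : Function.Injective (qv (r := r) c j) :=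
  fun _ _ h => by simpa [qv] using h

def rel : Vert ι r → Vert ι r → Prop
  | (c, none), (c', none) => c ≠ c'
  | (c, none), (c', some (j, .inr (some x))) => c = c' ∧ x < K j
  | (c, some (j, .inl x)), (c', some (j', .inr y)) => c = c' ∧ j = j' ∧ y ≠ some x
  | (c, some (j, .inr (some x))), (c', some (j', .inr (some y))) =>
      c = c' ∧ j = j' ∧ Paired (K j) x y
  | _, _ => False

variable (r) in
def graph : SimpleGraph (Vert ι r) := fromRel (rel K)

variable {K} {c : Bool} {j : ι} {u : Vert ι r}

lemma adj_root_iff : (graph r K).Adj (root c) u ↔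
    u = root (!c) ∨ ∃ j, ∃ x : Fin r, (x : ℕ) < K j ∧ qv c j (some x) = u := by
  obtain ⟨c', _ | ⟨j', x' | _ | y'⟩⟩ := u <;> cases c <;> cases c' <;>
    simp [graph, rel, root, qv, eq_comm]

lemma adj_pv_iff {x : Fin r} :
    (graph r K).Adj (pv c j x) u ↔ ∃ y, y ≠ some x ∧ qv c j y = u := by
  obtain ⟨c', _ | ⟨j', x' | _ | y'⟩⟩ := u <;> cases c <;> cases c' <;>
    simp [graph, rel, pv, qv, eq_comm, and_comm]

lemma adj_qv_iff {y : Option (Fin r)} : (graph r K).Adj (qv c j y) u ↔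
    (∃ x, y ≠ some x ∧ pv c j x = u) ∨
    ∃ x, y = some x ∧
      ((x : ℕ) < K j ∧ root c = u ∨ ∃ x' : Fin r, Paired (K j) x x' ∧ qv c j (some x') = u) := by
  obtain ⟨c', _ | ⟨j', x' | _ | y'⟩⟩ := u <;> cases c <;> cases c' <;> rcases y with _ | y <;>
    simp [graph, rel, pv, qv, root] <;> aesop (add safe Paired.symm, simp not_paired_self)

variable [DecidableEq ι]

lemma gdeg_pv (x : Fin r) : gdeg (graph r K) (pv c j x) = r := by
  rw [gdeg_eq_card_of_adj_iff ((univ.erase (some x)).image (qv c j)),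
    card_image_of_injective _ (qv_injective c j), card_erase_of_mem (mem_univ _), card_univ,
    Fintype.card_option, Fintype.card_fin, Nat.add_sub_cancel]
  intro u
  simp [adj_pv_iff]

lemma gdeg_qv_none : gdeg (graph r K) (qv c j none) = r := by
  rw [gdeg_eq_card_of_adj_iff (univ.image (pv c j)),
    card_image_of_injective _ (pv_injective c j), card_univ, Fintype.card_fin]
  intro u
  simp [adj_qv_iff, eq_comm]

lemma gdeg_qv_some (hK : Even (r - K j)) (x : Fin r) :
    gdeg (graph r K) (qv c j (some x)) = r := by
  have hP : #((univ.erase x).image (pv c j)) = r - 1 := by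
    rw [card_image_of_injective _ (pv_injective c j), card_erase_of_mem (mem_univ _), card_univ,
      Fintype.card_fin]
  have hr : 1 ≤ r := x.pos
  by_cases hx : (x : ℕ) < K j
  · rw [gdeg_eq_card_of_adj_iff (insert (root c) ((univ.erase x).image (pv c j))),
      card_insert_of_notMem (by simp [root, pv]), hP]
    · omega
    have hnp : ∀ x' : Fin r, ¬ Paired (K j) x x' := fun _ h => hx.not_ge h.1
    intro u
    simp [adj_qv_iff, hx, hnp, ne_comm, @eq_comm _ u, or_comm]
  · obtain ⟨y, hyr, hy⟩ := exists_paired (not_lt.1 hx) x.isLt hK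
    rw [gdeg_eq_card_of_adj_iff (insert (qv c j (some ⟨y, hyr⟩)) ((univ.erase x).image (pv c j))),
      card_insert_of_notMem (by simp [qv, pv]), hP]
    · omega
    have hp : ∀ x' : Fin r, Paired (K j) x x' ↔ x' = ⟨y, hyr⟩ :=
      fun x' => ⟨fun h => Fin.ext (h.unique hy), by rintro rfl; exact hy⟩
    intro u
    simp [adj_qv_iff, hx, hp, ne_comm, @eq_comm _ u, or_comm]

variable [Fintype ι] in
lemma gdeg_root (hK : ∀ j, K j ≤ r) : gdeg (graph r K) (root c) = ∑ j, K j + 1 := by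
  rw [gdeg_eq_card_of_adj_iff (insert (root (!c))
      ((univ.filter fun p : ι × Fin r => p.2 < K p.1).image fun p => qv c p.1 (some p.2))),
    card_insert_of_notMem (by simp [root, qv]),
    card_image_of_injective _ fun _ _ h => by simpa [qv, Prod.ext_iff] using h]
  · rw [card_filter, Fintype.sum_prod_type]
    simp_rw [← card_filter, Fin.card_filter_val_lt, min_eq_right (hK _)]
  intro u
  simp [adj_root_iff]

def blockP (c : Bool) (j : ι) : Finset (Vert ι r) := univ.image (pv c j)
def blockQ (c : Bool) (j : ι) : Finset (Vert ι r) := univ.image (qv c j)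

lemma card_blockP : #(blockP (r := r) c j) = r := by
  rw [blockP, card_image_of_injective _ (pv_injective c j), card_univ, Fintype.card_fin]

lemma card_blockQ : #(blockQ (r := r) c j) = r + 1 := by
  rw [blockQ, card_image_of_injective _ (qv_injective c j), card_univ, Fintype.card_option,
    Fintype.card_fin]

variable [Fintype ι] {F : SimpleGraph (Vert ι r)} [DecidableRel F.Adj]

lemma mem_neighborFinset_qv_inter_blockQ (hF : F ≤ graph r K) {y : Option (Fin r)}
    {u : Vert ι r} (hu : u ∈ F.neighborFinset (qv c j y) ∩ blockQ c j) :
    ∃ x x' : Fin r, y = some x ∧ Paired (K j) x x' ∧ qv c j (some x') = u := by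
  obtain ⟨hu, hQ⟩ := mem_inter.1 hu
  rcases adj_qv_iff.1 (hF ((mem_neighborFinset _ _ _).1 hu)) with
    ⟨x, -, rfl⟩ | ⟨x, rfl, ⟨-, rfl⟩ | ⟨x', hx', rfl⟩⟩
  · simp [blockQ, pv, qv] at hQ
  · simp [blockQ, root, qv] at hQ
  · exact ⟨x, x', rfl, hx', rfl⟩

lemma neighborFinset_subset_blockQ (hF : F ≤ graph r K) {p : Vert ι r} (hp : p ∈ blockP c j) :
    F.neighborFinset p ⊆ blockQ c j := by
  obtain ⟨x, -, rfl⟩ := mem_image.1 hp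
  intro u hu
  obtain ⟨y, -, rfl⟩ := adj_pv_iff.1 (hF ((mem_neighborFinset _ _ _).1 hu))
  exact mem_image_of_mem _ (mem_univ _)

lemma card_neighborFinset_sdiff_blockP (hF : F ≤ graph r K) {q : Vert ι r}
    (hq : q ∈ blockQ c j) :
    #(F.neighborFinset q \ blockP c j) =
      #(F.neighborFinset q ∩ blockQ c j) + #(F.neighborFinset q ∩ {root c}) := by
  obtain ⟨y, -, rfl⟩ := mem_image.1 hq
  rw [← card_union_of_disjoint (disjoint_left.2 fun u hu hu' => by
    simp [blockQ, root, qv, mem_singleton.1 (mem_inter.1 hu').2] at hu)]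
  congr 1
  ext u
  simp only [mem_sdiff, mem_union, mem_inter, mem_neighborFinset, blockP, blockQ, mem_image,
    mem_univ, true_and, mem_singleton]
  constructor
  · rintro ⟨hu, hP⟩
    rcases adj_qv_iff.1 (hF hu) with ⟨x, -, rfl⟩ | ⟨x, rfl, ⟨-, rfl⟩ | ⟨x', -, rfl⟩⟩
    · exact absurd ⟨x, rfl⟩ hP
    · exact Or.inr ⟨hu, rfl⟩
    · exact Or.inl ⟨hu, _, rfl⟩
  · rintro (⟨hu, y', rfl⟩ | ⟨hu, rfl⟩) <;> refine ⟨hu, ?_⟩ <;> rintro ⟨x, hx⟩ <;>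
      simp [pv, qv, root] at hx

lemma sum_card_neighborFinset_inter_blockQ_le (hF : F ≤ graph r K) :
    ∑ q ∈ blockQ c j, #(F.neighborFinset q ∩ blockQ c j) ≤ r - K j := by
  set S := (univ.filter fun x : Fin r => K j ≤ x).image fun x => qv c j (some x)
  have hS : #S ≤ r - K j := by
    refine card_image_le.trans (le_of_eq ?_)
    simp_rw [← not_lt, filter_not, card_sdiff_of_subset (filter_subset _ _),
      Fin.card_filter_val_lt, card_univ, Fintype.card_fin]
    omega
  calc ∑ q ∈ blockQ c j, #(F.neighborFinset q ∩ blockQ c j)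
      ≤ ∑ q ∈ blockQ c j, if q ∈ S then 1 else 0 := by
        refine sum_le_sum fun q hq => ?_
        obtain ⟨y, -, rfl⟩ := mem_image.1 hq
        split_ifs with hyS
        · refine card_le_one.2 fun a ha b hb => ?_
          obtain ⟨x₁, a', rfl, ha', rfl⟩ := mem_neighborFinset_qv_inter_blockQ hF ha
          obtain ⟨x₂, b', hx, hb', rfl⟩ := mem_neighborFinset_qv_inter_blockQ hF hb
          cases Option.some_injective _ hx
          rw [Fin.ext (ha'.unique hb')]
        · refine (card_eq_zero.2 (eq_empty_of_forall_notMem fun u hu => hyS ?_)).le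
          obtain ⟨x, x', rfl, hx', -⟩ := mem_neighborFinset_qv_inter_blockQ hF hu
          exact mem_image_of_mem _ (mem_filter.2 ⟨mem_univ _, hx'.1⟩)
    _ ≤ #S := by
        rw [sum_ite_mem, sum_const, smul_eq_mul, mul_one]
        exact card_le_card inter_subset_right
    _ ≤ r - K j := hS

lemma card_neighborFinset_root_inter_blockQ_le (hF : F ≤ graph r K) :
    #(F.neighborFinset (root c) ∩ blockQ c j) ≤ K j := by
  calc #(F.neighborFinset (root c) ∩ blockQ c j)
      ≤ #((univ.filter fun x : Fin r => (x : ℕ) < K j).image fun x => qv c j (some x)) := by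
        refine card_le_card fun u hu => ?_
        obtain ⟨hu, hQ⟩ := mem_inter.1 hu
        rcases adj_root_iff.1 (hF ((mem_neighborFinset _ _ _).1 hu)) with rfl | ⟨j', x, hx, rfl⟩
        · simp [blockQ, root, qv] at hQ
        · obtain rfl : j = j' := by simpa [blockQ, qv] using hQ
          exact mem_image_of_mem _ (mem_filter.2 ⟨mem_univ _, hx⟩)
    _ ≤ K j := card_image_le.trans (Fin.card_filter_val_lt.trans_le (min_le_right _ _))

lemma sum_card_neighborFinset_sdiff_blockP (hF : F ≤ graph r K) :
    ∑ q ∈ blockQ c j, #(F.neighborFinset q \ blockP c j) =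
      ∑ q ∈ blockQ c j, #(F.neighborFinset q ∩ blockQ c j) +
        #(F.neighborFinset (root c) ∩ blockQ c j) := by
  rw [sum_congr rfl fun q hq => card_neighborFinset_sdiff_blockP hF hq, sum_add_distrib,
    sum_card_neighborFinset_inter_comm F _ {root c}, sum_singleton]

lemma card_neighborFinset_root_inter_blockQ_mem_Ico {t : ℕ} (hF : F ≤ graph r K)
    (hdeg : ∀ v, (F.degree v : ℤ) = t ∨ (F.degree v : ℤ) = r - t) (ht : Odd t) (hr : Odd r)
    (htr : 3 * t + 1 < r) (hKt : t + 2 ≤ K j) (hKr : K j ≤ r) (hK : Even (r - K j)) :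
    #(F.neighborFinset (root c) ∩ blockQ c j) ∈ Set.Ico 1 (K j) := by
  rw [Set.mem_Ico]
  have hdiff := sum_degree_eq_add_sum_card_sdiff F fun p hp =>
    neighborFinset_subset_blockQ (c := c) (j := j) hF hp
  rw [sum_card_neighborFinset_sdiff_blockP hF] at hdiff
  have hM := sum_card_neighborFinset_inter_blockQ_le (c := c) (j := j) hF
  have hf := card_neighborFinset_root_inter_blockQ_le (c := c) (j := j) hF
  have hMeven := even_sum_card_neighborFinset_inter F (blockQ c j)
  generalize #(F.neighborFinset (root c) ∩ blockQ c j) = f at *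
  generalize ∑ q ∈ blockQ c j, #(F.neighborFinset q ∩ blockQ c j) = M at *
  -- `Q` has one vertex more than `P`, so their degree sums differ by `t` modulo `r - 2t`.
  have hmod : ((M + f : ℕ) : ℤ) ≡ t [ZMOD r - t - t] := by
    have hQ := sum_modEq_of_forall_eq_or_eq (blockQ c j) _ fun q _ => hdeg q
    have hP := sum_modEq_of_forall_eq_or_eq (blockP c j) _ fun p _ => hdeg p
    rw [card_blockQ, ← Nat.cast_sum, hdiff] at hQ
    rw [card_blockP] at hP
    have := hQ.sub hP
    push_cast at this ⊢
    convert this using 1 <;> ring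
  have hMf := eq_or_eq_of_modEq hmod (by positivity) (by push_cast; omega) (by omega)
  -- `M` is even: `M + f = t` makes `f` odd, and `M + f = r - t` makes `f` even while `K j` is odd.
  have := Nat.even_iff.1 hMeven
  have := Nat.odd_iff.1 ht
  have := Nat.odd_iff.1 hr
  have := Nat.even_iff.1 hK
  omega

lemma degree_root_eq (hF : F ≤ graph r K) :
    F.degree (root c) = #(F.neighborFinset (root c) ∩ {root (!c)}) +
      ∑ j, #(F.neighborFinset (root c) ∩ blockQ c j) := by
  have hsub : F.neighborFinset (root c) ⊆ {root (!c)} ∪ univ.biUnion (blockQ c) := by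
    intro u hu
    rcases adj_root_iff.1 (hF ((mem_neighborFinset _ _ _).1 hu)) with rfl | ⟨j, x, -, rfl⟩
    · exact mem_union_left _ (mem_singleton_self _)
    · exact mem_union_right _ (mem_biUnion.2 ⟨j, mem_univ _, mem_image_of_mem _ (mem_univ _)⟩)
  rw [← card_neighborFinset_eq_degree]
  conv_lhs => rw [← inter_eq_left.2 hsub, inter_union_distrib_left, inter_biUnion]
  rw [card_union_of_disjoint, card_biUnion]
  · intro j _ j' _ hj
    refine disjoint_left.2 fun u hu hu' => ?_
    obtain ⟨y, -, rfl⟩ := mem_image.1 (mem_inter.1 hu).2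
    obtain ⟨y', -, h⟩ := mem_image.1 (mem_inter.1 hu').2
    exact hj (by simp_all [qv])
  · refine disjoint_left.2 fun u hu hu' => ?_
    obtain rfl := mem_singleton.1 (mem_inter.1 hu).2
    simp [blockQ, root, qv] at hu'

omit [DecidableEq ι] in
lemma le_of_sum_add_one_eq (hsum : ∑ j, K j + 1 = r) (j : ι) : K j ≤ r := by
  have := single_le_sum (fun j _ => Nat.zero_le (K j)) (mem_univ j)
  omega

variable (r) in
lemma gdeg_graph (hK : ∀ j, Even (r - K j)) (hsum : ∑ j, K j + 1 = r) (v : Vert ι r) :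
    gdeg (graph r K) v = r := by
  obtain ⟨c, _ | ⟨j, x | _ | x⟩⟩ := v
  · exact (gdeg_root (le_of_sum_add_one_eq hsum)).trans hsum
  · exact gdeg_pv x
  · exact gdeg_qv_none
  · exact gdeg_qv_some (hK j) x

theorem not_exists_factor {t : ℕ} (ht : Odd t) (hr : Odd r) (hKt : ∀ j, t + 2 ≤ K j)
    (hK : ∀ j, Even (r - K j)) (hsum : ∑ j, K j + 1 = r) (hι : t < Fintype.card ι) :
    ¬ ∃ F, IsFactorWithDegrees (graph r K) F t (r - t) := by
  classical
  rintro ⟨F, hF, hdeg⟩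
  simp only [gdeg_eq_degree] at hdeg
  have hKr := le_of_sum_add_one_eq hsum
  have htr : 3 * t + 1 < r := by
    have := card_nsmul_le_sum univ K (t + 2) fun j _ => hKt j
    rw [card_univ, smul_eq_mul] at this
    nlinarith
  have hblock j := card_neighborFinset_root_inter_blockQ_mem_Ico (c := true) hF hdeg ht hr htr
    (hKt j) (hKr j) (hK j)
  have hroot := degree_root_eq (c := true) hF
  have hbridge : #(F.neighborFinset (root true) ∩ {root (!true)}) ≤ 1 :=
    (card_le_card inter_subset_right).trans_eq (card_singleton _)
  have hlow : Fintype.card ι ≤ ∑ j, #(F.neighborFinset (root true) ∩ blockQ true j) := by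
    simpa using card_nsmul_le_sum univ _ 1 fun j _ => (hblock j).1
  have hhigh : ∑ j, (#(F.neighborFinset (root true) ∩ blockQ true j) + 1) ≤ ∑ j, K j :=
    sum_le_sum fun j _ => (hblock j).2
  rw [sum_add_distrib, sum_const, card_univ, smul_eq_mul, mul_one] at hhigh
  rcases hdeg (root true) with h | h <;> omega

end Gadget

lemma exists_block_sizes {r t : ℕ} (ht : Odd t) (hr : Odd r) (hrt : (t + 1) * (t + 2) ≤ r) :
    ∃ K : Fin (t + 1) → ℕ, (∀ j, t + 2 ≤ K j) ∧ (∀ j, Even (r - K j)) ∧ ∑ j, K j + 1 = r := by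
  have hsq : (t + 1) * (t + 2) = t * (t + 2) + t + 2 := by ring
  have hodd := Nat.odd_iff.1 (ht.mul (ht.add_even even_two))
  have := Nat.odd_iff.1 ht
  have := Nat.odd_iff.1 hr
  refine ⟨Fin.cons (r - 1 - t * (t + 2)) fun _ => t + 2, Fin.cases ?_ fun _ => ?_,
    Fin.cases ?_ fun _ => ?_, ?_⟩
  all_goals simp only [Fin.cons_zero, Fin.cons_succ, Fin.sum_cons, sum_const, card_univ,
    Fintype.card_fin, smul_eq_mul, Nat.even_iff]
  all_goals omega

theorem exists_regular_graph_no_factor_general (r t : ℕ) (ht : Odd t)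
    (hr : Even r ∨ (t + 1) * (t + 2) ≤ r) :
    ∃ (n : ℕ) (G : SimpleGraph (Fin n)),
      (∀ v, gdeg G v = r) ∧
      ¬ ∃ F : SimpleGraph (Fin n), F ≤ G ∧
        ∀ v, (gdeg F v : ℤ) = t ∨ (gdeg F v : ℤ) = (r : ℤ) - t := by
  rcases Nat.even_or_odd r with hre | hro
  · refine ⟨r + 1, ⊤, gdeg_top r, not_exists_factor_of_odd_card _ ?_ (Int.odd_coe_nat _ |>.2 ht) ?_⟩
    · simpa using hre.add_one
    · exact (Int.even_coe_nat r |>.2 hre).sub_odd (Int.odd_coe_nat t |>.2 ht)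
  · obtain ⟨K, hKt, hK, hsum⟩ :=
      exists_block_sizes ht hro (hr.resolve_left (Nat.not_even_iff_odd.2 hro))
    exact exists_fin_of_regular_of_not_factor _ r (Gadget.gdeg_graph r hK hsum)
      (Gadget.not_exists_factor ht hro hKt hK hsum (by simp))

/-- For every odd positive integer `t` and every `r` which is even or satisfies
`r ≥ (t+1)(t+2)`, there exists an `r`-regular graph with no `{t, r-t}`-factor. -/
theorem exists_regular_graph_no_factor (r t : ℕ) (ht : Odd t) (htpos : 0 < t)
    (hr : Even r ∨ (t + 1) * (t + 2) ≤ r) :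
    ∃ (n : ℕ) (G : SimpleGraph (Fin n)),
      (∀ v, gdeg G v = r) ∧
      ¬ ∃ F : SimpleGraph (Fin n), F ≤ G ∧
        ∀ v, (gdeg F v : ℤ) = t ∨ (gdeg F v : ℤ) = (r : ℤ) - t :=
  exists_regular_graph_no_factor_general r t ht hr
end

section
/- For every odd r ≥ 7, there exists an r-regular graph with no {1, r−1}-factor. -/
/-!
Replace every vertex `c` of an `r`-regular multigraph `H` by a copy of `K_{r-1,r}` whose `r`-side
is the set of edge-ends at `c`, and join the two ends of each edge of `H`: the result is
`r`-regular. If `F` is a `{1, r-1}`-factor of it, then modulo `r - 2`, where `1 ≡ r - 1`, the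
`F`-degrees in the copy of `c` sum to `r` on the `r`-side and to `r - 1` on the other side; the
difference counts the ends at `c` of the edges of `H` whose two ends are joined in `F`, so these
edges form a sub-multigraph in which `c` has degree `1` or `r - 1`.

Let `H` live on `{0, 1, 2, 3}`, with `3`, `3`, `r - 6` parallel edges from `0` to `1`, `2`, `3`
and `(r-3)/2`, `(r-3)/2`, `3` loops at `1`, `2`, `3`. Loops count twice and `r - 1` is even, so of
the three edges `0 — 1` the sub-multigraph keeps `1` (if `1` has degree `1`) or an even number
`≥ r - 1 - (r - 3)`, that is `2`; likewise for `2`. The degree of `0` then lies between `2` and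
`2 + 2 + (r - 6)`, so it is neither `1` nor `r - 1`.
-/

open Finset

lemma gdeg_comap_equiv {V W : Type} (G : SimpleGraph W) (e : V ≃ W) (v : V) :
    gdeg (G.comap e) v = gdeg G (e v) :=
  Set.ncard_preimage_of_injective_subset_range e.injective
    (e.surjective.range_eq ▸ Set.subset_univ _)

lemma gdeg_eq_sum_of_forall_adj_mem {W : Type} {G : SimpleGraph W} [DecidableRel G.Adj] {v : W}
    {s : Finset W} (hs : ∀ w, G.Adj v w → w ∈ s) :
    gdeg G v = ∑ w ∈ s, if G.Adj v w then 1 else 0 := by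
  rw [← card_filter, gdeg, ← Set.ncard_coe_finset]
  congr 1
  ext w
  simpa using fun h => hs w h

lemma sum_modEq_card {ι : Type*} {r : ℕ} (hr : 2 ≤ r) {s : Finset ι} {d : ι → ℕ}
    (hd : ∀ i ∈ s, d i = 1 ∨ d i = r - 1) : ∑ i ∈ s, d i ≡ #s [MOD r - 2] := by
  rw [card_eq_sum_ones]
  refine Nat.ModEq.sum fun i hi => ?_
  rcases hd i hi with h | h <;> rw [h]
  rw [show r - 1 = 1 + (r - 2) by omega]
  exact Nat.add_modulus_modEq_iff.mpr rfl

lemma eq_one_or_eq_sub_one_of_add_modEq {r x : ℕ} (hr : 4 ≤ r) (hx : x ≤ r)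
    (h : x + (r - 1) ≡ r [MOD r - 2]) : x = 1 ∨ x = r - 1 := by
  obtain ⟨m, rfl⟩ : ∃ m, r = m + 4 := ⟨r - 4, by omega⟩
  simp only [show m + 4 - 1 = m + 3 by omega, show m + 4 - 2 = m + 2 by omega] at h ⊢
  have h1 : x % (m + 2) = 1 := by
    rw [show m + 4 = 1 + (m + 3) by omega] at h
    rw [Nat.ModEq.add_right_cancel' (m + 3) h, Nat.mod_eq_of_lt (by omega)]
  have hq := Nat.div_add_mod x (m + 2)
  rcases hq' : x / (m + 2) with _ | _ | q <;> rw [hq', h1] at hq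
  · omega
  · omega
  · nlinarith

namespace SimpleGraph

variable {C E : Type} (r : ℕ) (κ : E × Bool → C)

/-- `κ` encodes a multigraph with edge type `E`: it sends the end `(e, b)` of `e` to its vertex. -/
def bicliqueGraph : SimpleGraph (C × Fin (r - 1) ⊕ E × Bool) where
  Adj
    | .inl (c, _), .inr h | .inr h, .inl (c, _) => κ h = c
    | .inr (e, b), .inr (e', b') => e = e' ∧ b ≠ b'
    | .inl _, .inl _ => False
  symm := ⟨by rintro (_ | ⟨e, b⟩) (_ | ⟨e', b'⟩) h <;> simp_all [eq_comm]⟩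
  loopless := ⟨by rintro (_ | _) <;> simp⟩

/-- The degree of `c` in the sub-multigraph of the edges satisfying `p`, loops counting twice. -/
def restrictDegree [Fintype E] [DecidableEq C] (p : E → Prop) [DecidablePred p] (c : C) : ℕ :=
  #{h | κ h = c ∧ p h.1}

variable {r κ}

@[simp] lemma bicliqueGraph_adj_inl_inr {c : C} {i : Fin (r - 1)} {h : E × Bool} :
    (bicliqueGraph r κ).Adj (.inl (c, i)) (.inr h) ↔ κ h = c := Iff.rfl

@[simp] lemma bicliqueGraph_adj_inr_inl {c : C} {i : Fin (r - 1)} {h : E × Bool} :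
    (bicliqueGraph r κ).Adj (.inr h) (.inl (c, i)) ↔ κ h = c := Iff.rfl

@[simp] lemma bicliqueGraph_adj_inr_inr {h h' : E × Bool} :
    (bicliqueGraph r κ).Adj (.inr h) (.inr h') ↔ h.1 = h'.1 ∧ h.2 ≠ h'.2 := Iff.rfl

@[simp] lemma bicliqueGraph_not_adj_inl_inl {x y : C × Fin (r - 1)} :
    ¬ (bicliqueGraph r κ).Adj (.inl x) (.inl y) := id

variable [DecidableEq C] {F : SimpleGraph (C × Fin (r - 1) ⊕ E × Bool)}
  [DecidableRel F.Adj]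

lemma gdeg_inl_of_le_bicliqueGraph [Fintype E] (hF : F ≤ bicliqueGraph r κ) (c : C)
    (i : Fin (r - 1)) :
    gdeg F (.inl (c, i)) = ∑ h with κ h = c, if F.Adj (.inl (c, i)) (.inr h) then 1 else 0 := by
  rw [gdeg_eq_sum_of_forall_adj_mem (s := (univ.filter (κ · = c)).map .inr), sum_map]
  · rfl
  rintro (_ | h) hadj <;> simpa using hF hadj

lemma gdeg_inr_of_le_bicliqueGraph [DecidableEq E] (hF : F ≤ bicliqueGraph r κ)
    (h : E × Bool) :
    gdeg F (.inr h) = (∑ i, if F.Adj (.inr h) (.inl (κ h, i)) then 1 else 0) +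
      if F.Adj (.inr h) (.inr (h.1, !h.2)) then 1 else 0 := by
  rw [gdeg_eq_sum_of_forall_adj_mem (s := insert (Sum.inr (h.1, !h.2))
    (univ.map ⟨fun i => .inl (κ h, i), fun i j hij => by simpa using hij⟩)),
    sum_insert (by simp), sum_map, add_comm]
  · rfl
  rintro (⟨c, i⟩ | ⟨e, b⟩) hadj <;> have := hF hadj
  · simp_all
  · obtain ⟨rfl, hb⟩ := this
    simpa [Bool.eq_not_iff, eq_comm] using hb


variable [Fintype E] [DecidableEq E]

lemma gdeg_bicliqueGraph (hr : 1 ≤ r) (hκ : ∀ c, #{h | κ h = c} = r)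
    (v : C × Fin (r - 1) ⊕ E × Bool) : gdeg (bicliqueGraph r κ) v = r := by
  classical
  rcases v with ⟨c, i⟩ | h
  · rw [gdeg_inl_of_le_bicliqueGraph le_rfl, sum_ite_of_true (by simp), sum_const, hκ,
      smul_eq_mul, mul_one]
  · rw [gdeg_inr_of_le_bicliqueGraph le_rfl]
    simp only [bicliqueGraph_adj_inr_inl, ↓reduceIte, sum_const, card_univ, Fintype.card_fin,
      smul_eq_mul, mul_one, bicliqueGraph_adj_inr_inr, ne_eq, Bool.eq_not_self, not_false_eq_true,
      and_self]
    omega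

theorem restrictDegree_eq_one_or_of_le_bicliqueGraph (hr : 4 ≤ r)
    (hκ : ∀ c, #{h | κ h = c} = r) (hFG : F ≤ bicliqueGraph r κ)
    (hF : ∀ v, gdeg F v = 1 ∨ gdeg F v = r - 1) (c : C) :
    restrictDegree κ (fun e => F.Adj (.inr (e, false)) (.inr (e, true))) c = 1 ∨
      restrictDegree κ (fun e => F.Adj (.inr (e, false)) (.inr (e, true))) c = r - 1 := by
  set x := restrictDegree κ (fun e => F.Adj (.inr (e, false)) (.inr (e, true))) c with hx_def
  have hx : x = ∑ h with κ h = c, if F.Adj (.inr h) (.inr (h.1, !h.2)) then 1 else 0 := by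
    rw [hx_def, restrictDegree, ← card_filter, filter_filter]
    congr 1 with ⟨e, b⟩
    cases b <;> simp [F.adj_comm]
  have hcount : ∑ h with κ h = c, gdeg F (.inr h) = ∑ i, gdeg F (.inl (c, i)) + x := by
    rw [hx, sum_congr rfl fun h _ => gdeg_inr_of_le_bicliqueGraph hFG h, sum_add_distrib,
      sum_comm]
    congr 1
    refine sum_congr rfl fun i _ => ?_
    rw [gdeg_inl_of_le_bicliqueGraph hFG]
    refine sum_congr rfl fun h hh => ?_
    simp only [(mem_filter.mp hh).2, F.adj_comm]
  have hx_le : x ≤ r := hκ c ▸ card_le_card (monotone_filter_right _ fun _ _ => And.left)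
  have hA : ∑ i, gdeg F (.inl (c, i)) ≡ r - 1 [MOD r - 2] := by
    simpa using sum_modEq_card (by omega) (s := univ) fun i _ => hF (.inl (c, i))
  refine eq_one_or_eq_sub_one_of_add_modEq hr hx_le ?_
  calc x + (r - 1) ≡ x + ∑ i, gdeg F (.inl (c, i)) [MOD r - 2] := hA.symm.add_left x
    _ = ∑ h with κ h = c, gdeg F (.inr h) := by rw [hcount, add_comm]
    _ ≡ #{h | κ h = c} [MOD r - 2] := sum_modEq_card (by omega) fun h _ => hF (.inr h)
    _ = r := hκ c

end SimpleGraph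

open SimpleGraph

/-- Three edges `0 — 1`, three edges `0 — 2`, `r - 6` edges `0 — 3`, and `(r - 3) / 2`,
`(r - 3) / 2`, `3` loops at `1`, `2`, `3`; see `hubEnd`. -/
abbrev HubEdge (r : ℕ) : Type :=
  Fin 3 ⊕ Fin 3 ⊕ Fin (r - 6) ⊕ Fin ((r - 3) / 2) ⊕ Fin ((r - 3) / 2) ⊕ Fin 3

def hubEnd {r : ℕ} : HubEdge r × Bool → Fin 4
  | (.inl _, b) => bif b then 1 else 0
  | (.inr (.inl _), b) => bif b then 2 else 0
  | (.inr (.inr (.inl _)), b) => bif b then 3 else 0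
  | (.inr (.inr (.inr (.inl _))), _) => 1
  | (.inr (.inr (.inr (.inr (.inl _)))), _) => 2
  | (.inr (.inr (.inr (.inr (.inr _)))), _) => 3

lemma card_hubEnd_eq {r : ℕ} (hr : Odd r) (hr7 : 7 ≤ r) (c : Fin 4) :
    #{h : HubEdge r × Bool | hubEnd h = c} = r := by
  obtain ⟨k, rfl⟩ := hr
  rw [card_filter]
  fin_cases c <;> simp [Fintype.sum_prod_type, Fintype.sum_sum_type, hubEnd] <;> omega

lemma not_forall_restrictDegree_hubEnd {r : ℕ} (hr : Odd r) (hr7 : 7 ≤ r)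
    (p : HubEdge r → Prop) [DecidablePred p] :
    ¬ ∀ c, restrictDegree hubEnd p c = 1 ∨ restrictDegree hubEnd p c = r - 1 := by
  intro h
  have h0 := h 0
  have h1 := h 1
  have h2 := h 2
  simp only [restrictDegree, card_filter] at h0 h1 h2
  simp only [hubEnd, Fin.isValue, Fintype.sum_prod_type, Fintype.univ_bool, mem_singleton,
    Bool.true_eq_false, not_false_eq_true, sum_insert, sum_singleton, sum_add_distrib,
    Fintype.sum_sum_type, cond_true, one_ne_zero, false_and, ↓reduceIte, sum_const_zero,
    Fin.reduceEq, add_zero, cond_false, true_and, sum_boole, Nat.cast_id, zero_add,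
    zero_ne_one] at h0 h1 h2
  have ha := card_le_univ {i : Fin 3 | p (.inl i)}
  have hb := card_le_univ {i : Fin 3 | p (.inr (.inl i))}
  have hd := card_le_univ {i : Fin (r - 6) | p (.inr (.inr (.inl i)))}
  have hl₁ := card_le_univ {i : Fin ((r - 3) / 2) | p (.inr (.inr (.inr (.inl i))))}
  have hl₂ := card_le_univ {i : Fin ((r - 3) / 2) | p (.inr (.inr (.inr (.inr (.inl i)))))}
  simp only [Fintype.card_fin] at ha hb hd hl₁ hl₂
  obtain ⟨k, rfl⟩ := hr
  omega

theorem bicliqueGraph_hubEnd_no_factor {r : ℕ} (hr : Odd r) (hr7 : 7 ≤ r)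
    {F : SimpleGraph (Fin 4 × Fin (r - 1) ⊕ HubEdge r × Bool)}
    (hFG : F ≤ bicliqueGraph r hubEnd) : ¬ ∀ v, gdeg F v = 1 ∨ gdeg F v = r - 1 := by
  classical
  exact fun hF => not_forall_restrictDegree_hubEnd hr hr7 _
    (restrictDegree_eq_one_or_of_le_bicliqueGraph (by omega) (card_hubEnd_eq hr hr7) hFG hF)

/-- For every odd `r ≥ 7` there exists an `r`-regular graph with no
`{1, r-1}`-factor. -/
theorem exists_regular_graph_no_one_factor (r : ℕ) (hr : Odd r) (hr7 : 7 ≤ r) :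
    ∃ (n : ℕ) (G : SimpleGraph (Fin n)),
      (∀ v, gdeg G v = r) ∧
      ¬ ∃ F : SimpleGraph (Fin n), F ≤ G ∧
        ∀ v, gdeg F v = 1 ∨ gdeg F v = r - 1 := by
  let e := Fintype.equivFin (Fin 4 × Fin (r - 1) ⊕ HubEdge r × Bool)
  refine ⟨_, (bicliqueGraph r hubEnd).comap e.symm, fun v => ?_, ?_⟩
  · rw [gdeg_comap_equiv]
    exact gdeg_bicliqueGraph (by omega) (card_hubEnd_eq hr hr7) _
  · rintro ⟨F, hFG, hF⟩
    refine bicliqueGraph_hubEnd_no_factor hr hr7 (F := F.comap e) (fun x y hxy => ?_) fun v => ?_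
    · simpa using hFG hxy
    · rw [gdeg_comap_equiv]; exact hF (e v)
end

section
/- For all r, Δ ≥ 2, every r-uniform hypergraph H with maximum degree Δ satisfies χ_cf(H) ≤ (1/2)·(e·r)^{1+2/r}·Δ^{2/r}. -/
/-
Colour the vertices uniformly at random with `k = ⌊K⌋` colours, `K` the claimed bound.
If no vertex of an edge has a unique colour, every colour on it occurs at least twice, so
the edge uses at most `t = ⌊r/2⌋` colours; this has probability at most
`C(k,t) (t/k)^r ≤ t^r / (t! k^(r-t))`. These bad events are independent for disjoint edges
and every edge meets at most `r(Δ-1)` others, so the symmetric Lovász Local Lemma applies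
as soon as `e · rΔ · t^r ≤ t! k^(r-t)`. With `s = r - t`, that inequality follows from
`t^t ≤ t! e^(t-1)`, `K^s ≤ e ⌊K⌋^s` and `(er)^(s+1) Δ ≤ (2K)^s`; the last one is where the
exponents in `K` come from.

The Local Lemma is proved by counting colourings: the conditional probability of a bad
event given that a set `R` of other events is avoided is at most `x`, by strong induction
on `R`, splitting `R` into the events that share a vertex with it and those that do not.
-/

open Finset Real
open scoped Nat

section LocalLemma

variable {V α : Type*} [Fintype V] [DecidableEq V] [Fintype α]

theorem card_filter_and_mul_card_eq {P Q : (V → α) → Prop} [DecidablePred P] [DecidablePred Q]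
    {s : Set V} (hP : DependsOn P s) (hQ : DependsOn Q sᶜ) :
    #{c | P c ∧ Q c} * Fintype.card (V → α) = #{c | P c} * #{c | Q c} := by
  classical
  have swap_swap (c d : V → α) : s.piecewise (s.piecewise c d) (s.piecewise d c) = c := by
    ext v; by_cases hv : v ∈ s <;> simp [hv]
  rw [← card_univ, ← card_product, ← card_product]
  refine card_nbij' (fun p ↦ (s.piecewise p.1 p.2, s.piecewise p.2 p.1))
    (fun p ↦ (s.piecewise p.1 p.2, s.piecewise p.2 p.1)) ?_ ?_
    (fun p _ ↦ Prod.ext (swap_swap _ _) (swap_swap _ _))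
    (fun p _ ↦ Prod.ext (swap_swap _ _) (swap_swap _ _))
  all_goals
    rintro ⟨c, d⟩ h
    simp only [coe_product, coe_filter, mem_univ, true_and, Set.mem_prod, Set.mem_ofPred_eq,
      coe_univ, Set.mem_univ, and_true] at h ⊢
    refine ⟨(hP fun v hv ↦ ?_).mpr h.1, (hQ fun v hv ↦ ?_).mpr h.2⟩
    · simp [hv]
    · simp [show v ∉ s from hv]

variable {ι : Type*} (B : ι → (V → α) → Prop) [∀ i, DecidablePred (B i)]

def avoiding (R : Finset ι) : Finset (V → α) := {c | ∀ i ∈ R, ¬ B i c}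

variable {B} (S : ι → Finset V)

theorem avoiding_anti {R T : Finset ι} (h : R ⊆ T) : avoiding B T ⊆ avoiding B R := by
  intro c
  simp only [avoiding, mem_filter, mem_univ, true_and]
  exact fun hc i hi ↦ hc i (h hi)

@[simp] theorem avoiding_empty : avoiding B (∅ : Finset ι) = univ := by
  simp [avoiding]

theorem card_filter_avoiding_mul_card_eq (hB : ∀ i, DependsOn (B i) (S i)) {R : Finset ι}
    {i : ι} (hR : ∀ j ∈ R, Disjoint (S i) (S j)) :
    #{c ∈ avoiding B R | B i c} * Fintype.card (V → α) = #{c | B i c} * #(avoiding B R) := by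
  have hQ : DependsOn (fun c ↦ ∀ j ∈ R, ¬ B j c) (↑(S i))ᶜ := by
    intro c c' h
    simp only [eq_iff_iff]
    refine forall₂_congr fun j hj ↦ not_congr (Eq.to_iff (hB j fun v hv ↦ h v ?_))
    exact disjoint_left.mp (hR j hj).symm hv
  rw [avoiding, ← card_filter_and_mul_card_eq (hB i) hQ, filter_filter]
  simp only [and_comm]

variable [DecidableEq ι]

theorem one_sub_mul_card_avoiding_le_card_avoiding_insert {x : ℝ} {R : Finset ι} {j : ι}
    (h : #{c ∈ avoiding B R | B j c} ≤ x * #(avoiding B R)) :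
    (1 - x) * #(avoiding B R) ≤ #(avoiding B (insert j R)) := by
  have hinsert : avoiding B (insert j R) = {c ∈ avoiding B R | ¬ B j c} := by
    ext c; simp [avoiding, and_comm]
  have hsplit : (#{c ∈ avoiding B R | B j c} : ℝ) + #{c ∈ avoiding B R | ¬ B j c} =
      #(avoiding B R) := by
    exact_mod_cast card_filter_add_card_filter_not _
  rw [hinsert]
  linarith

theorem pow_mul_card_avoiding_le {x : ℝ} (hx : x ≤ 1) (R U : Finset ι)
    (h : ∀ T ⊆ U, ∀ j ∈ U, j ∉ T →
      #{c ∈ avoiding B (R ∪ T) | B j c} ≤ x * #(avoiding B (R ∪ T))) :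
    (1 - x) ^ #U * #(avoiding B R) ≤ #(avoiding B (R ∪ U)) := by
  induction U using Finset.induction_on with
  | empty => simp
  | insert j U hjU ih =>
    have ih := ih fun T hT i hi ↦ h T (hT.trans (subset_insert _ _)) i (mem_insert_of_mem hi)
    rw [card_insert_of_notMem hjU, pow_succ, mul_comm _ (1 - x), mul_assoc, union_insert]
    calc (1 - x) * ((1 - x) ^ #U * #(avoiding B R))
        ≤ (1 - x) * #(avoiding B (R ∪ U)) := by gcongr
      _ ≤ _ := one_sub_mul_card_avoiding_le_card_avoiding_insert
          (h U (subset_insert _ _) j (mem_insert_self _ _) hjU)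

-- In probabilistic terms: `P(B i | no B j, j ∈ R) ≤ x`.
theorem card_filter_avoiding_le [Nonempty α] (hB : ∀ i, DependsOn (B i) (S i)) {I : Finset ι}
    {d : ℕ} (hdeg : ∀ i ∈ I, #{j ∈ I.erase i | ¬ Disjoint (S i) (S j)} ≤ d) {x : ℝ}
    (hx0 : 0 ≤ x) (hx1 : x ≤ 1)
    (hp : ∀ i ∈ I, #{c | B i c} ≤ x * (1 - x) ^ d * Fintype.card (V → α))
    {R : Finset ι} (hRI : R ⊆ I) {i : ι} (hi : i ∈ I) (hiR : i ∉ R) :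
    #{c ∈ avoiding B R | B i c} ≤ x * #(avoiding B R) := by
  induction R using Finset.strongInduction generalizing i with | H R ih => ?_
  set Rfar := {j ∈ R | Disjoint (S i) (S j)}
  set Rnear := {j ∈ R | ¬ Disjoint (S i) (S j)}
  have hnear : #Rnear ≤ d := by
    refine (card_le_card fun j hj ↦ ?_).trans (hdeg i hi)
    simp only [Rnear, mem_filter, mem_erase] at hj ⊢
    exact ⟨⟨fun h ↦ hiR (h ▸ hj.1), hRI hj.1⟩, hj.2⟩
  have hgrow : (1 - x) ^ #Rnear * #(avoiding B Rfar) ≤ #(avoiding B R) := by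
    rw [← filter_union_filter_not_eq (fun j ↦ Disjoint (S i) (S j)) R]
    refine pow_mul_card_avoiding_le hx1 _ _ fun T hT j hj hjT ↦ ?_
    have hjR : j ∈ R := (mem_filter.mp hj).1
    have hjfar : j ∉ Rfar ∪ T := by simp [Rfar, hjT, (mem_filter.mp hj).2]
    have hsub : Rfar ∪ T ⊂ R := (ssubset_iff_of_subset
      (union_subset (filter_subset _ _) (hT.trans (filter_subset _ _)))).2 ⟨j, hjR, hjfar⟩
    exact ih _ hsub (hsub.subset.trans hRI) (hRI hjR) hjfar
  have hindep : (#{c ∈ avoiding B Rfar | B i c} * Fintype.card (V → α) : ℝ) =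
      #{c | B i c} * #(avoiding B Rfar) := by
    exact_mod_cast card_filter_avoiding_mul_card_eq S hB fun j hj ↦ (mem_filter.mp hj).2
  have hΩ : (0 : ℝ) < Fintype.card (V → α) := by exact_mod_cast Fintype.card_pos
  calc (#{c ∈ avoiding B R | B i c} : ℝ)
      ≤ #{c ∈ avoiding B Rfar | B i c} := by
        gcongr; exact avoiding_anti (filter_subset _ _)
    _ ≤ x * (1 - x) ^ d * #(avoiding B Rfar) := by
        rw [← mul_le_mul_iff_left₀ hΩ, hindep]
        calc (#{c | B i c} * #(avoiding B Rfar) : ℝ)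
            ≤ x * (1 - x) ^ d * Fintype.card (V → α) * #(avoiding B Rfar) := by
              gcongr; exact hp i hi
          _ = _ := by ring
    _ ≤ x * (1 - x) ^ #Rnear * #(avoiding B Rfar) := by
        have hpow : (1 - x) ^ d ≤ (1 - x) ^ #Rnear :=
          pow_le_pow_of_le_one (by linarith) (by linarith) hnear
        gcongr
    _ ≤ x * #(avoiding B R) := by
        rw [mul_assoc]; gcongr

theorem exists_forall_not_of_card_le [Nonempty α] (hB : ∀ i, DependsOn (B i) (S i))
    {I : Finset ι} {d : ℕ}
    (hdeg : ∀ i ∈ I, #{j ∈ I.erase i | ¬ Disjoint (S i) (S j)} ≤ d)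
    {x : ℝ} (hx0 : 0 ≤ x) (hx1 : x < 1)
    (hp : ∀ i ∈ I, #{c | B i c} ≤ x * (1 - x) ^ d * Fintype.card (V → α)) :
    ∃ c : V → α, ∀ i ∈ I, ¬ B i c := by
  have hgrow := pow_mul_card_avoiding_le hx1.le ∅ I fun T hT j hj hjT ↦
    card_filter_avoiding_le S hB hdeg hx0 hx1.le hp (by simpa using hT) hj (by simpa using hjT)
  simp only [avoiding_empty, card_univ, empty_union] at hgrow
  have hpos : (0 : ℝ) < #(avoiding B I) :=
    lt_of_lt_of_le (by have := sub_pos.2 hx1; positivity) hgrow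
  obtain ⟨c, hc⟩ := card_pos.mp (by exact_mod_cast hpos)
  exact ⟨c, (mem_filter.mp hc).2⟩

theorem exists_forall_not_of_exp_mul_card_le [Nonempty α] (hB : ∀ i, DependsOn (B i) (S i))
    {I : Finset ι} {d : ℕ} (hd : 1 ≤ d)
    (hdeg : ∀ i ∈ I, #{j ∈ I.erase i | ¬ Disjoint (S i) (S j)} ≤ d)
    (hp : ∀ i ∈ I, exp 1 * (d + 1) * #{c | B i c} ≤ Fintype.card (V → α)) :
    ∃ c : V → α, ∀ i ∈ I, ¬ B i c := by
  have hd0 : (0 : ℝ) < d := by exact_mod_cast hd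
  have hbase : 1 - 1 / ((d : ℝ) + 1) = (1 + (d : ℝ)⁻¹)⁻¹ := by field_simp; ring
  have hexp : (exp 1)⁻¹ ≤ (1 - 1 / ((d : ℝ) + 1)) ^ d := by
    rw [hbase, inv_pow]
    exact inv_anti₀ (by positivity) one_add_inv_pow_le_exp
  refine exists_forall_not_of_card_le S hB hdeg (x := 1 / (d + 1)) (by positivity)
    ((div_lt_one (by positivity)).2 (by linarith)) fun i hi ↦ ?_
  rw [← mul_le_mul_iff_right₀ (by positivity : 0 < exp 1 * (d + 1))]
  calc exp 1 * (d + 1) * #{c | B i c} ≤ Fintype.card (V → α) := hp i hi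
    _ = exp 1 * (d + 1) * (1 / (d + 1) * (exp 1)⁻¹ * Fintype.card (V → α)) := by
        field_simp
    _ ≤ exp 1 * (d + 1) * (1 / (d + 1) * (1 - 1 / (d + 1)) ^ d * Fintype.card (V → α)) := by
        gcongr

end LocalLemma

section Coloring

variable {V α : Type*}

def HasUniqueColor (c : V → α) (e : Finset V) : Prop :=
  ∃ v ∈ e, ∀ w ∈ e, c w = c v → w = v

instance [DecidableEq V] [DecidableEq α] (c : V → α) (e : Finset V) :
    Decidable (HasUniqueColor c e) :=
  inferInstanceAs (Decidable (∃ v ∈ e, _))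

theorem dependsOn_hasUniqueColor (e : Finset V) :
    DependsOn (fun c : V → α ↦ HasUniqueColor c e) e := by
  intro c d h
  simp only [HasUniqueColor, eq_iff_iff]
  refine exists_congr fun v ↦ and_congr_right fun hv ↦ forall₂_congr fun w hw ↦ ?_
  rw [h v hv, h w hw]

theorem two_mul_card_image_le_of_not_hasUniqueColor [DecidableEq V] [DecidableEq α]
    {c : V → α} {e : Finset V} (h : ¬ HasUniqueColor c e) : 2 * #(e.image c) ≤ #e := by
  rw [card_eq_sum_card_image c e, mul_comm, ← smul_eq_mul]
  refine card_nsmul_le_sum _ _ _ fun b hb ↦ ?_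
  obtain ⟨v, hv, rfl⟩ := mem_image.mp hb
  simp only [HasUniqueColor, not_exists, not_and, not_forall] at h
  obtain ⟨w, hw, hcw, hwv⟩ := h v hv
  exact one_lt_card.mpr ⟨w, by simp [hw, hcw], v, by simp [hv], hwv⟩

variable [Fintype V] [DecidableEq V] [Fintype α] [DecidableEq α]

theorem card_not_hasUniqueColor_le (e : Finset V) (he : #e / 2 ≤ Fintype.card α) :
    #{c : V → α | ¬ HasUniqueColor c e} ≤
      (Fintype.card α).choose (#e / 2) * (#e / 2) ^ #e *
        Fintype.card α ^ (Fintype.card V - #e) := by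
  set t := #e / 2
  have hsub : ({c : V → α | ¬ HasUniqueColor c e} : Finset _) ⊆ (powersetCard t univ).biUnion
      fun T ↦ Fintype.piFinset fun v ↦ if v ∈ e then T else univ := by
    intro c hc
    have himg : #(e.image c) ≤ t := by
      have := two_mul_card_image_le_of_not_hasUniqueColor (mem_filter.mp hc).2
      omega
    obtain ⟨T, hcT, hT⟩ := exists_superset_card_eq himg (by simpa using he)
    refine mem_biUnion.mpr ⟨T, by simp [mem_powersetCard, hT],
      Fintype.mem_piFinset.mpr fun v ↦ ?_⟩
    split_ifs with hv
    · exact hcT (mem_image_of_mem c hv)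
    · exact mem_univ _
  refine (card_le_card hsub).trans (card_biUnion_le.trans_eq ?_)
  rw [sum_congr rfl fun T hT ↦ ?_, sum_const, card_powersetCard, card_univ, smul_eq_mul,
    mul_assoc]
  rw [Fintype.card_piFinset, prod_apply_ite, (mem_powersetCard.mp hT).2, prod_const, prod_const,
    card_univ, filter_mem_eq_inter, univ_inter, ← compl_filter, filter_mem_eq_inter, univ_inter,
    card_compl]

theorem exp_one_mul_card_not_hasUniqueColor_le (e : Finset V) {D : ℝ} (hD : 0 ≤ D)
    (he : #e / 2 ≤ Fintype.card α)
    (hnum : exp 1 * D * ((#e / 2 : ℕ) : ℝ) ^ #e ≤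
      (#e / 2)! * (Fintype.card α : ℝ) ^ (#e - #e / 2)) :
    exp 1 * D * #{c : V → α | ¬ HasUniqueColor c e} ≤ Fintype.card (V → α) := by
  set t := #e / 2
  set q := Fintype.card α
  set n := Fintype.card V
  have hbad : (#{c : V → α | ¬ HasUniqueColor c e} : ℝ) ≤
      q.choose t * (t : ℝ) ^ #e * (q : ℝ) ^ (n - #e) := by
    exact_mod_cast card_not_hasUniqueColor_le e he
  have hchoose : (q.choose t : ℝ) ≤ (q : ℝ) ^ t / t ! := Nat.choose_le_pow_div t q
  have hsize : #e ≤ n := card_le_univ e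
  rw [Fintype.card_fun, Nat.cast_pow]
  calc exp 1 * D * #{c : V → α | ¬ HasUniqueColor c e}
      ≤ exp 1 * D * ((q : ℝ) ^ t / t ! * (t : ℝ) ^ #e * (q : ℝ) ^ (n - #e)) := by
        gcongr; exact hbad.trans (by gcongr)
    _ = exp 1 * D * (t : ℝ) ^ #e * ((q : ℝ) ^ t * (q : ℝ) ^ (n - #e)) / t ! := by
        ring
    _ ≤ t ! * (q : ℝ) ^ (#e - t) * ((q : ℝ) ^ t * (q : ℝ) ^ (n - #e)) / t ! := by
        gcongr
    _ = (q : ℝ) ^ n := by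
        rw [mul_div_right_comm, mul_div_cancel_left₀ _ (by positivity), ← pow_add, ← pow_add]
        congr 1; omega

end Coloring

theorem card_filter_not_disjoint_le {V : Type} [DecidableEq V] {E : Finset (Finset V)} {Δ : ℕ}
    (hdeg : ∀ v, hypDeg E v ≤ Δ) {e : Finset V} (he : e ∈ E) :
    #{f ∈ E.erase e | ¬ Disjoint e f} ≤ #e * (Δ - 1) := by
  have hcover :
      {f ∈ E.erase e | ¬ Disjoint e f} ⊆ e.biUnion fun v ↦ {f ∈ E.erase e | v ∈ f} := by
    intro f hf
    obtain ⟨v, hve, hvf⟩ := not_disjoint_iff.mp (mem_filter.mp hf).2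
    exact mem_biUnion.mpr ⟨v, hve, mem_filter.mpr ⟨(mem_filter.mp hf).1, hvf⟩⟩
  have hother (v : V) (hv : v ∈ e) : #{f ∈ E.erase e | v ∈ f} ≤ Δ - 1 := by
    rw [filter_erase, card_erase_of_mem (mem_filter.mpr ⟨he, hv⟩)]
    exact Nat.sub_le_sub_right (hdeg v) 1
  calc #{f ∈ E.erase e | ¬ Disjoint e f} ≤ ∑ v ∈ e, #{f ∈ E.erase e | v ∈ f} :=
        (card_le_card hcover).trans card_biUnion_le
    _ ≤ ∑ _v ∈ e, (Δ - 1) := sum_le_sum hother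
    _ = #e * (Δ - 1) := by rw [sum_const, smul_eq_mul]

-- `pow_div_factorial_le_exp` only gives `t! e^t`; the bound below cannot afford the extra `e`.
theorem pow_self_le_factorial_mul_exp_one_pow (t : ℕ) :
    (t : ℝ) ^ t ≤ t ! * exp 1 ^ (t - 1) := by
  induction t with
  | zero => simp
  | succ t ih =>
    rcases Nat.eq_zero_or_pos t with rfl | ht
    · simp
    have hstep : ((t + 1 : ℕ) : ℝ) ^ t = (t : ℝ) ^ t * (1 + (t : ℝ)⁻¹) ^ t := by
      rw [← mul_pow]; congr 1; field_simp; push_cast; ring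
    calc ((t + 1 : ℕ) : ℝ) ^ (t + 1)
        = (t + 1) * ((t : ℝ) ^ t * (1 + (t : ℝ)⁻¹) ^ t) := by
          rw [pow_succ, hstep]; push_cast; ring
      _ ≤ (t + 1) * (t ! * exp 1 ^ (t - 1) * exp 1) := by
          gcongr; exact one_add_inv_pow_le_exp
      _ = (t + 1)! * exp 1 ^ (t + 1 - 1) := by
          rw [Nat.factorial_succ, Nat.add_sub_cancel, ← Nat.sub_add_cancel ht, pow_succ]
          push_cast; ring

theorem pow_le_exp_one_mul_floor_pow {x : ℝ} (hx : 0 ≤ x) {s : ℕ} (hs : s ≤ ⌊x⌋₊) :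
    x ^ s ≤ exp 1 * (⌊x⌋₊ : ℝ) ^ s := by
  set k := ⌊x⌋₊
  rcases Nat.eq_zero_or_pos k with hk | hk
  · rw [show s = 0 by omega]; simp [one_le_exp zero_le_one]
  have hk' : (0 : ℝ) < k := by exact_mod_cast hk
  calc x ^ s ≤ ((k : ℝ) + 1) ^ s := by gcongr; exact (Nat.lt_floor_add_one x).le
    _ = (1 + (k : ℝ)⁻¹) ^ s * (k : ℝ) ^ s := by rw [← mul_pow]; congr 1; field_simp
    _ ≤ (1 + (k : ℝ)⁻¹) ^ k * (k : ℝ) ^ s := by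
        gcongr
        · exact le_add_of_nonneg_right (by positivity)
    _ ≤ exp 1 * (k : ℝ) ^ s := by gcongr; exact one_add_inv_pow_le_exp

theorem pow_succ_mul_le_rpow_mul_rpow_pow {a b : ℝ} (ha : 1 ≤ a) (hb : 1 ≤ b) {r s : ℕ}
    (hr : 0 < r) (hrs : r ≤ 2 * s) :
    a ^ (s + 1) * b ≤ (a ^ (1 + 2 / (r : ℝ)) * b ^ (2 / (r : ℝ))) ^ s := by
  have hr' : (0 : ℝ) < r := by exact_mod_cast hr
  have hrs' : (r : ℝ) ≤ 2 * s := by exact_mod_cast hrs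
  have hexp : (1 : ℝ) ≤ 2 / r * s := by rw [div_mul_eq_mul_div, le_div_iff₀ hr']; linarith
  rw [mul_pow, ← Real.rpow_mul_natCast (by linarith), ← Real.rpow_mul_natCast (by linarith),
    add_mul, one_mul]
  gcongr
  · rw [← Real.rpow_natCast]; push_cast
    exact Real.rpow_le_rpow_of_exponent_le ha (by linarith)
  · exact Real.self_le_rpow_of_one_le hb hexp

noncomputable def cfBound (r Δ : ℕ) : ℝ :=
  (Real.exp 1 * r) ^ ((1 : ℝ) + 2 / r) * (Δ : ℝ) ^ ((2 : ℝ) / r) / 2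

theorem exp_one_mul_div_two_le_cfBound {r Δ : ℕ} (hr : 1 ≤ r) (hΔ : 1 ≤ Δ) :
    exp 1 * r / 2 ≤ cfBound r Δ := by
  have her : 1 ≤ exp 1 * r :=
    one_le_mul_of_one_le_of_one_le (one_le_exp zero_le_one) (by exact_mod_cast hr)
  have hΔ' : (1 : ℝ) ≤ Δ := by exact_mod_cast hΔ
  have h1 : exp 1 * r ≤ (exp 1 * r) ^ ((1 : ℝ) + 2 / r) :=
    Real.self_le_rpow_of_one_le her (le_add_of_nonneg_right (by positivity))
  have h2 : 1 ≤ (Δ : ℝ) ^ ((2 : ℝ) / r) := Real.one_le_rpow hΔ' (by positivity)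
  unfold cfBound
  gcongr ?_ / _
  exact h1.trans (le_mul_of_one_le_right (by positivity) h2)

theorem cfBound_nonneg (r Δ : ℕ) : 0 ≤ cfBound r Δ := by
  unfold cfBound; positivity

theorem sub_div_two_le_floor_cfBound {r Δ : ℕ} (hr : 1 ≤ r) (hΔ : 1 ≤ Δ) :
    r - r / 2 ≤ ⌊cfBound r Δ⌋₊ := by
  refine Nat.le_floor ((?_ : ((r - r / 2 : ℕ) : ℝ) ≤ exp 1 * r / 2).trans
    (exp_one_mul_div_two_le_cfBound hr hΔ))
  have h2 : 2 * (r - r / 2) ≤ r + 1 := by omega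
  have h2' : (2 : ℝ) * (r - r / 2 : ℕ) ≤ r + 1 := by exact_mod_cast h2
  have he := Real.exp_one_gt_two
  have hr' : (1 : ℝ) ≤ r := by exact_mod_cast hr
  nlinarith

theorem exp_one_mul_mul_pow_le_factorial_mul_floor_cfBound_pow {r Δ : ℕ} (hr : 2 ≤ r)
    (hΔ : 1 ≤ Δ) :
    exp 1 * (r * Δ) * ((r / 2 : ℕ) : ℝ) ^ r ≤
      (r / 2)! * (⌊cfBound r Δ⌋₊ : ℝ) ^ (r - r / 2) := by
  set t := r / 2
  set s := r - r / 2
  set k := ⌊cfBound r Δ⌋₊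
  have hts : t ≤ s := by omega
  have hs : 1 ≤ s := by omega
  have h2t : (2 : ℝ) * t ≤ r := by exact_mod_cast (by omega : 2 * t ≤ r)
  have her : 1 ≤ exp 1 * r :=
    one_le_mul_of_one_le_of_one_le (one_le_exp zero_le_one) (by exact_mod_cast (by omega : 1 ≤ r))
  have hbound : (exp 1 * r) ^ (s + 1) * Δ ≤ (2 * cfBound r Δ) ^ s := by
    rw [cfBound, mul_div_cancel₀ _ two_ne_zero]
    exact pow_succ_mul_le_rpow_mul_rpow_pow her (by exact_mod_cast hΔ) (by omega) (by omega)
  have hfloor : cfBound r Δ ^ s ≤ exp 1 * (k : ℝ) ^ s :=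
    pow_le_exp_one_mul_floor_pow (cfBound_nonneg r Δ) (sub_div_two_le_floor_cfBound (by omega) hΔ)
  have htt : (t : ℝ) ^ t ≤ t ! * exp 1 ^ (s - 1) :=
    (pow_self_le_factorial_mul_exp_one_pow t).trans
      (by gcongr; exact one_le_exp zero_le_one)
  have hpos : 0 < exp 1 * 2 ^ s := by positivity
  refine le_of_mul_le_mul_right ?_ hpos
  calc exp 1 * (r * Δ) * (t : ℝ) ^ r * (exp 1 * 2 ^ s)
      = exp 1 ^ 2 * (r * Δ) * (t : ℝ) ^ t * (2 * t : ℝ) ^ s := by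
        rw [← Nat.add_sub_of_le (by omega : t ≤ r)]; ring
    _ ≤ exp 1 ^ 2 * (r * Δ) * (t ! * exp 1 ^ (s - 1)) * (r : ℝ) ^ s := by gcongr
    _ = t ! * ((exp 1 * r) ^ (s + 1) * Δ) := by
        have hes : exp 1 ^ 2 * exp 1 ^ (s - 1) = exp 1 ^ (s + 1) := by
          rw [← pow_add]; congr 1; omega
        linear_combination ((r : ℝ) * Δ * t ! * (r : ℝ) ^ s) * hes
    _ ≤ t ! * (2 ^ s * (exp 1 * (k : ℝ) ^ s)) := by
        gcongr t ! * ?_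
        calc _ ≤ (2 * cfBound r Δ) ^ s := hbound
          _ = 2 ^ s * cfBound r Δ ^ s := mul_pow _ _ _
          _ ≤ _ := by gcongr
    _ = t ! * (k : ℝ) ^ s * (exp 1 * 2 ^ s) := by ring

open Real in
/-- For `r, Δ ≥ 2`, every `r`-uniform hypergraph of maximum degree at most `Δ`
satisfies `χ_cf ≤ (1/2) (e r)^{1 + 2/r} Δ^{2/r}`. -/
theorem chiCF_le_LLL {V : Type} [Fintype V] [DecidableEq V]
    (r Δ : ℕ) (hr : 2 ≤ r) (hΔ : 2 ≤ Δ)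
    (E : Finset (Finset V))
    (huniform : ∀ e ∈ E, e.card = r)
    (hdeg : ∀ v : V, hypDeg E v ≤ Δ) :
    (chiCF V E : ℝ) ≤
      (Real.exp 1 * r) ^ ((1 : ℝ) + 2 / r) * (Δ : ℝ) ^ ((2 : ℝ) / r) / 2 := by
  change (chiCF V E : ℝ) ≤ cfBound r Δ
  set k := ⌊cfBound r Δ⌋₊
  have hk : r - r / 2 ≤ k := sub_div_two_le_floor_cfBound (by omega) (by omega)
  have hnum := exp_one_mul_mul_pow_le_factorial_mul_floor_cfBound_pow hr (by omega : 1 ≤ Δ)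
  have : Nonempty (Fin k) := ⟨⟨0, by omega⟩⟩
  have hbad (e : Finset V) (he : e ∈ E) : exp 1 * (((r * (Δ - 1) : ℕ) : ℝ) + 1) *
      #{c : V → Fin k | ¬ HasUniqueColor c e} ≤ Fintype.card (V → Fin k) := by
    have hD : ((r * (Δ - 1) : ℕ) : ℝ) + 1 ≤ r * Δ := by
      have : r ≤ r * Δ := Nat.le_mul_of_pos_right r (by omega)
      exact_mod_cast (by rw [Nat.mul_sub_one]; omega : r * (Δ - 1) + 1 ≤ r * Δ)
    calc _ ≤ exp 1 * (r * Δ) * #{c : V → Fin k | ¬ HasUniqueColor c e} := by gcongr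
      _ ≤ Fintype.card (V → Fin k) :=
        exp_one_mul_card_not_hasUniqueColor_le e (by positivity)
          (by rw [huniform e he, Fintype.card_fin]; omega)
          (by rw [huniform e he, Fintype.card_fin]; exact hnum)
  obtain ⟨c, hc⟩ := exists_forall_not_of_exp_mul_card_le
    (B := fun e (c : V → Fin k) ↦ ¬ HasUniqueColor c e) id
    (fun e _ _ h ↦ congrArg Not (dependsOn_hasUniqueColor e h))
    (Nat.mul_pos (by omega) (by omega))
    (fun e he ↦ huniform e he ▸ card_filter_not_disjoint_le hdeg he) hbad
  have hcf : ConflictFree E c := fun e he ↦ not_not.mp (hc e he)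
  calc (chiCF V E : ℝ) ≤ k := by exact_mod_cast (Nat.sInf_le ⟨c, hcf⟩ : chiCF V E ≤ k)
    _ ≤ cfBound r Δ := Nat.floor_le (cfBound_nonneg r Δ)
end

section
/- There exists a sequence of hypergraphs H_Δ (Δ = 1, 2, 3, ...) such that H_Δ has maximum degree Δ, chromatic number 2, and conflict-free chromatic number Δ + 1. -/
/-- A proper coloring: no hyperedge is monochromatic. -/
def ProperColoring {V α : Type} (E : Finset (Finset V)) (c : V → α) : Prop :=
  ∀ e ∈ E, ∃ v ∈ e, ∃ w ∈ e, c v ≠ c w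

/-- The (proper) chromatic number of a hypergraph. -/
noncomputable def chi (V : Type) (E : Finset (Finset V)) : ℕ :=
  sInf {k : ℕ | ∃ c : V → Fin k, ProperColoring E c}

/-!
Realise `H_Δ` on the numbers below `2 ^ Δ`, read as bit strings: its edges are the dyadic blocks
of sizes `2, 4, …, 2 ^ Δ`. The whole vertex set is the block of size `2 ^ Δ`, and the blocks of
smaller size are those of the two halves (top bit `0` or `1`), so this is the recursive `H_Δ`.
Each vertex lies in one block per level, and colouring by the lowest bit is proper. Colouring a
vertex by its number of trailing ones is conflict-free: in each block the vertex ending in the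
most ones is alone with its colour. Conversely, given a conflict-free colouring, the half of a
block that avoids the block's uniquely coloured vertex misses that colour altogether, so by
induction a block of size `2 ^ i` carries at least `i + 1` colours.
-/

open Finset

lemma ConflictFree.of_comp {V α β : Type} {E : Finset (Finset V)} {c : V → α} {f : α → β}
    (hc : ConflictFree E (f ∘ c)) : ConflictFree E c := by
  intro e he
  obtain ⟨v, hv, huniq⟩ := hc e he
  exact ⟨v, hv, fun w hw hwv => huniq w hw (congrArg f hwv)⟩

lemma ProperColoring.two_le {V : Type} {E : Finset (Finset V)} {e : Finset V} {k : ℕ}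
    {c : V → Fin k} (hc : ProperColoring E c) (he : e ∈ E) : 2 ≤ k := by
  obtain ⟨v, -, w, -, hvw⟩ := hc e he
  exact Fin.nontrivial_iff_two_le.1 ⟨⟨_, _, hvw⟩⟩

namespace Nat

lemma div_two_pow_eq_div_two_pow_iff {v w i : ℕ} :
    v / 2 ^ i = w / 2 ^ i ↔ ∀ k, i ≤ k → v.testBit k = w.testBit k := by
  constructor
  · intro h k hk
    obtain ⟨m, rfl⟩ := Nat.exists_eq_add_of_le' hk
    rw [← testBit_div_two_pow, h, testBit_div_two_pow]
  · intro h
    exact eq_of_testBit_eq fun k => by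
      rw [testBit_div_two_pow, testBit_div_two_pow, h _ (le_add_left i k)]

def trailingOnes (n : ℕ) : ℕ :=
  Nat.find (⟨n, testBit_lt_two_pow Nat.lt_two_pow_self⟩ : ∃ k, n.testBit k = false)

lemma le_trailingOnes_iff {n i : ℕ} : i ≤ n.trailingOnes ↔ ∀ k < i, n.testBit k = true := by
  simp [trailingOnes, le_find_iff]

lemma trailingOnes_le {n Δ : ℕ} (h : n < 2 ^ Δ) : n.trailingOnes ≤ Δ :=
  Nat.find_min' _ (testBit_lt_two_pow h)

end Nat

section DyadicHypergraph

variable {Δ i j : ℕ} {v w : Fin (2 ^ Δ)}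

def dyadicBlock (Δ i : ℕ) (v : Fin (2 ^ Δ)) : Finset (Fin (2 ^ Δ)) :=
  univ.filter fun w => (w : ℕ) / 2 ^ i = (v : ℕ) / 2 ^ i

def dyadicHypergraph (Δ : ℕ) : Finset (Finset (Fin (2 ^ Δ))) :=
  (Icc 1 Δ).biUnion fun i => univ.image (dyadicBlock Δ i)

lemma mem_dyadicHypergraph {e : Finset (Fin (2 ^ Δ))} :
    e ∈ dyadicHypergraph Δ ↔ ∃ i ∈ Icc 1 Δ, ∃ v, dyadicBlock Δ i v = e := by
  simp [dyadicHypergraph]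

lemma dyadicBlock_mem_dyadicHypergraph (h1 : 1 ≤ i) (hi : i ≤ Δ) (v : Fin (2 ^ Δ)) :
    dyadicBlock Δ i v ∈ dyadicHypergraph Δ :=
  mem_dyadicHypergraph.2 ⟨i, mem_Icc.2 ⟨h1, hi⟩, v, rfl⟩

lemma mem_dyadicBlock :
    w ∈ dyadicBlock Δ i v ↔ ∀ k, i ≤ k → (w : ℕ).testBit k = (v : ℕ).testBit k := by
  simp [dyadicBlock, Nat.div_two_pow_eq_div_two_pow_iff]

lemma mem_dyadicBlock_comm : w ∈ dyadicBlock Δ i v ↔ v ∈ dyadicBlock Δ i w := by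
  simp [dyadicBlock, eq_comm]

lemma self_mem_dyadicBlock (i : ℕ) (v : Fin (2 ^ Δ)) : v ∈ dyadicBlock Δ i v := by
  simp [dyadicBlock]

lemma dyadicBlock_eq_of_mem (hw : w ∈ dyadicBlock Δ i v) :
    dyadicBlock Δ i w = dyadicBlock Δ i v := by
  simp only [dyadicBlock, mem_filter, mem_univ, true_and] at hw ⊢
  rw [hw]

lemma dyadicBlock_subset (hij : i ≤ j) (hw : w ∈ dyadicBlock Δ j v) :
    dyadicBlock Δ i w ⊆ dyadicBlock Δ j v := fun _ hx =>
  mem_dyadicBlock.2 fun k hk =>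
    (mem_dyadicBlock.1 hx k (hij.trans hk)).trans (mem_dyadicBlock.1 hw k hk)

def flipBit (v : Fin (2 ^ Δ)) (hi : i < Δ) : Fin (2 ^ Δ) :=
  ⟨v ^^^ 2 ^ i, Nat.xor_lt_two_pow v.isLt (Nat.pow_lt_pow_right one_lt_two hi)⟩

lemma testBit_flipBit (v : Fin (2 ^ Δ)) (hi : i < Δ) (k : ℕ) :
    (flipBit v hi : ℕ).testBit k = ((v : ℕ).testBit k ^^ decide (i = k)) := by
  simp [flipBit, Nat.testBit_xor, Nat.testBit_two_pow]

lemma flipBit_mem_dyadicBlock (hi : i < Δ) (hij : i < j) : flipBit v hi ∈ dyadicBlock Δ j v :=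
  mem_dyadicBlock.2 fun k hk => by simp [testBit_flipBit, (hij.trans_le hk).ne]

lemma flipBit_notMem_dyadicBlock (hi : i < Δ) : flipBit v hi ∉ dyadicBlock Δ i v := fun h => by
  simpa [testBit_flipBit] using mem_dyadicBlock.1 h i le_rfl

lemma dyadicBlock_strictMonoOn (v : Fin (2 ^ Δ)) :
    StrictMonoOn (dyadicBlock Δ · v) (Set.Iic Δ) := by
  intro a _ b hb hab
  rw [ssubset_iff_of_subset (dyadicBlock_subset hab.le (self_mem_dyadicBlock b v))]
  exact ⟨_, flipBit_mem_dyadicBlock (hab.trans_le hb) hab, flipBit_notMem_dyadicBlock _⟩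

lemma filter_mem_dyadicHypergraph (v : Fin (2 ^ Δ)) :
    (dyadicHypergraph Δ).filter (v ∈ ·) = (Icc 1 Δ).image (dyadicBlock Δ · v) := by
  ext e
  simp only [mem_filter, mem_dyadicHypergraph, mem_image]
  constructor
  · rintro ⟨⟨i, hi, w, rfl⟩, hv⟩
    exact ⟨i, hi, dyadicBlock_eq_of_mem hv⟩
  · rintro ⟨i, hi, rfl⟩
    exact ⟨⟨i, hi, v, rfl⟩, self_mem_dyadicBlock i v⟩

lemma hypDeg_dyadicHypergraph (v : Fin (2 ^ Δ)) : hypDeg (dyadicHypergraph Δ) v = Δ := by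
  rw [hypDeg, filter_mem_dyadicHypergraph, card_image_of_injOn, Nat.card_Icc, Nat.add_sub_cancel]
  exact (dyadicBlock_strictMonoOn v).injOn.mono fun i hi => (mem_Icc.1 hi).2

lemma sup_hypDeg_dyadicHypergraph : univ.sup (hypDeg (dyadicHypergraph Δ)) = Δ := by
  rw [funext hypDeg_dyadicHypergraph, sup_const univ_nonempty]

lemma properColoring_testBit_zero :
    ProperColoring (dyadicHypergraph Δ)
      fun v : Fin (2 ^ Δ) => finTwoEquiv.symm ((v : ℕ).testBit 0) := by
  intro e he
  obtain ⟨i, hi, v, rfl⟩ := mem_dyadicHypergraph.1 he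
  obtain ⟨h1, hiΔ⟩ := mem_Icc.1 hi
  refine ⟨v, self_mem_dyadicBlock i v, flipBit v (h1.trans hiΔ), flipBit_mem_dyadicBlock _ h1,
    finTwoEquiv.symm.injective.ne ?_⟩
  rw [testBit_flipBit]
  cases (v : ℕ).testBit 0 <;> simp

lemma chi_dyadicHypergraph (hΔ : 1 ≤ Δ) : chi (Fin (2 ^ Δ)) (dyadicHypergraph Δ) = 2 :=
  IsLeast.csInf_eq ⟨⟨_, properColoring_testBit_zero⟩,
    fun _ ⟨_, hc⟩ =>
      hc.two_le (dyadicBlock_mem_dyadicHypergraph hΔ le_rfl ⟨0, by positivity⟩)⟩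

lemma conflictFree_trailingOnes :
    ConflictFree (dyadicHypergraph Δ) fun v : Fin (2 ^ Δ) => (v : ℕ).trailingOnes := by
  intro e he
  obtain ⟨i, hi, v, rfl⟩ := mem_dyadicHypergraph.1 he
  have hlow : 2 ^ i - 1 < 2 ^ Δ :=
    (Nat.sub_lt (by positivity) one_pos).trans_le (Nat.pow_le_pow_right two_pos (mem_Icc.1 hi).2)
  let u : Fin (2 ^ Δ) := ⟨v ||| (2 ^ i - 1), Nat.or_lt_two_pow v.isLt hlow⟩
  have hu : ∀ k, (u : ℕ).testBit k = ((v : ℕ).testBit k || decide (k < i)) := fun k => by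
    simp [u, Nat.testBit_or, Nat.testBit_two_pow_sub_one]
  refine ⟨u, mem_dyadicBlock.2 fun k hk => by simp [hu, hk.not_gt],
    fun w hw (hwu : (w : ℕ).trailingOnes = (u : ℕ).trailingOnes) => ?_⟩
  have hiw : i ≤ (w : ℕ).trailingOnes :=
    hwu ▸ Nat.le_trailingOnes_iff.2 fun k hk => by simp [hu, hk]
  refine Fin.ext (Nat.eq_of_testBit_eq fun k => ?_)
  rcases lt_or_ge k i with hk | hk
  · simp [Nat.le_trailingOnes_iff.1 hiw k hk, hu, hk]
  · simp [mem_dyadicBlock.1 hw k hk, hu, hk.not_gt]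

lemma ConflictFree.le_card_image_dyadicBlock {α : Type} [DecidableEq α] {c : Fin (2 ^ Δ) → α}
    (hc : ConflictFree (dyadicHypergraph Δ) c) (hi : i ≤ Δ) (v : Fin (2 ^ Δ)) :
    i + 1 ≤ ((dyadicBlock Δ i v).image c).card := by
  induction i generalizing v with
  | zero => exact card_pos.2 ⟨c v, mem_image_of_mem c (self_mem_dyadicBlock 0 v)⟩
  | succ i ih =>
    obtain ⟨u, hu, huniq⟩ := hc _ (dyadicBlock_mem_dyadicHypergraph i.succ_pos hi v)
    let w := flipBit u (Nat.lt_of_succ_le hi)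
    have hwv : w ∈ dyadicBlock Δ (i + 1) v :=
      dyadicBlock_eq_of_mem hu ▸ flipBit_mem_dyadicBlock _ i.lt_succ_self
    have hsub : dyadicBlock Δ i w ⊆ dyadicBlock Δ (i + 1) v := dyadicBlock_subset i.le_succ hwv
    have hcu : c u ∉ (dyadicBlock Δ i w).image c := by
      intro h
      obtain ⟨x, hx, hxu⟩ := mem_image.1 h
      have hxu : x = u := huniq x (hsub hx) hxu
      exact mem_dyadicBlock_comm.not.1 (flipBit_notMem_dyadicBlock _) (hxu ▸ hx)
    calc i + 1 + 1 ≤ (insert (c u) ((dyadicBlock Δ i w).image c)).card := by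
          rw [card_insert_of_notMem hcu]; exact Nat.succ_le_succ (ih (Nat.le_of_succ_le hi) w)
      _ ≤ ((dyadicBlock Δ (i + 1) v).image c).card :=
          card_le_card (insert_subset (mem_image_of_mem c hu) (image_subset_image hsub))

variable (Δ) in
lemma chiCF_dyadicHypergraph : chiCF (Fin (2 ^ Δ)) (dyadicHypergraph Δ) = Δ + 1 := by
  refine IsLeast.csInf_eq
    ⟨⟨fun v => ⟨(v : ℕ).trailingOnes, Nat.lt_succ_of_le (Nat.trailingOnes_le v.isLt)⟩,
      ConflictFree.of_comp (f := Fin.val) conflictFree_trailingOnes⟩, ?_⟩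
  rintro k ⟨c, hc⟩
  calc Δ + 1 ≤ ((dyadicBlock Δ Δ ⟨0, by positivity⟩).image c).card :=
        hc.le_card_image_dyadicBlock le_rfl _
    _ ≤ Fintype.card (Fin k) := card_le_univ _
    _ = k := Fintype.card_fin k

end DyadicHypergraph

/-- For every `Δ ≥ 1` there is a hypergraph `H_Δ` with maximum degree `Δ`,
chromatic number `2`, and conflict-free chromatic number `Δ + 1`. -/
theorem exists_hypergraph_chi_two_chiCF_max (Δ : ℕ) (hΔ : 1 ≤ Δ) :
    ∃ (n : ℕ) (E : Finset (Finset (Fin n))),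
      Finset.univ.sup (hypDeg E) = Δ ∧
      chi (Fin n) E = 2 ∧
      chiCF (Fin n) E = Δ + 1 :=
  ⟨2 ^ Δ, dyadicHypergraph Δ, sup_hypDeg_dyadicHypergraph, chi_dyadicHypergraph hΔ,
    chiCF_dyadicHypergraph Δ⟩
end

section
/- Let H be the hypergraph obtained from two vertex-disjoint copies of the complete graph K_Δ (viewed as a 2-uniform hypergraph) together with one additional hyperedge containing all 2Δ vertices. Then χ_cf(H) ≥ Δ + 1. -/
/-- The hypergraph made of two vertex-disjoint copies of the complete graph
`K_Δ` (as a 2-uniform hypergraph) together with one hyperedge containing all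
`2Δ` vertices. -/
def doubleCliqueEdges (Δ : ℕ) : Finset (Finset (Fin Δ ⊕ Fin Δ)) :=
  ((Finset.univ : Finset (Fin Δ × Fin Δ)).filter (fun p => p.1 ≠ p.2)).image
      (fun p => {Sum.inl p.1, Sum.inl p.2}) ∪
  ((Finset.univ : Finset (Fin Δ × Fin Δ)).filter (fun p => p.1 ≠ p.2)).image
      (fun p => {Sum.inr p.1, Sum.inr p.2}) ∪
  {(Finset.univ : Finset (Fin Δ ⊕ Fin Δ))}

/-!
If only `Δ` colors were available, each copy of `K_Δ` would have to be rainbow, so every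
color would appear exactly once in each copy, hence twice on the big hyperedge, which then
has no uniquely colored vertex.
-/

namespace ConflictFree

variable {V α : Type} [DecidableEq V] {E : Finset (Finset V)} {c : V → α}

theorem apply_ne_of_pair_mem (hc : ConflictFree E c) {u v : V} (huv : u ≠ v)
    (hE : {u, v} ∈ E) : c u ≠ c v := by
  intro hcuv
  obtain ⟨w, hw, huniq⟩ := hc _ hE
  have hcw : c u = c w ∧ c v = c w := by
    rcases Finset.mem_insert.mp hw with rfl | hw
    · simp [hcuv]
    · simp [Finset.mem_singleton.mp hw, hcuv]
  have hu : u = w := huniq u (by simp) hcw.1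
  have hv : v = w := huniq v (by simp) hcw.2
  exact huv (hu.trans hv.symm)

theorem injective_comp_of_pair_mem (hc : ConflictFree E c) {ι : Type} {f : ι → V}
    (hf : Function.Injective f) (hE : ∀ i j, i ≠ j → {f i, f j} ∈ E) :
    Function.Injective (c ∘ f) := by
  intro i j hij
  by_contra hne
  exact hc.apply_ne_of_pair_mem (hf.ne hne) (hE i j hne) hij

end ConflictFree

theorem Fin.surjective_of_injective_of_le {n k : ℕ} {f : Fin n → Fin k}
    (hf : Function.Injective f) (hkn : k ≤ n) : Function.Surjective f := by
  have hnk : n ≤ k := by simpa using Fintype.card_le_of_injective f hf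
  exact ((Fintype.bijective_iff_injective_and_card f).mpr ⟨hf, by simp; omega⟩).2

theorem exists_ne_apply_eq_of_surjective_comp {V ι α : Type} {c : V → α} {f g : ι → V}
    (hfg : ∀ i j, f i ≠ g j) (hf : Function.Surjective (c ∘ f))
    (hg : Function.Surjective (c ∘ g)) (v : V) : ∃ w, w ≠ v ∧ c w = c v := by
  obtain ⟨i, hi⟩ := hf (c v)
  obtain ⟨j, hj⟩ := hg (c v)
  by_cases hiv : f i = v
  · exact ⟨g j, fun h => hfg i j (hiv.trans h.symm), hj⟩
  · exact ⟨f i, hiv, hi⟩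

theorem inl_pair_mem_doubleCliqueEdges {Δ : ℕ} {i j : Fin Δ} (hij : i ≠ j) :
    {Sum.inl i, Sum.inl j} ∈ doubleCliqueEdges Δ := by
  simp only [doubleCliqueEdges, Finset.mem_union, Finset.mem_image, Finset.mem_filter]
  exact .inl (.inl ⟨(i, j), ⟨Finset.mem_univ _, hij⟩, rfl⟩)

theorem inr_pair_mem_doubleCliqueEdges {Δ : ℕ} {i j : Fin Δ} (hij : i ≠ j) :
    {Sum.inr i, Sum.inr j} ∈ doubleCliqueEdges Δ := by
  simp only [doubleCliqueEdges, Finset.mem_union, Finset.mem_image, Finset.mem_filter]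
  exact .inl (.inr ⟨(i, j), ⟨Finset.mem_univ _, hij⟩, rfl⟩)

theorem univ_mem_doubleCliqueEdges (Δ : ℕ) : Finset.univ ∈ doubleCliqueEdges Δ := by
  simp [doubleCliqueEdges]

/-- The conflict-free chromatic number of this hypergraph is at least `Δ + 1`. -/
theorem doubleClique_chiCF_ge (Δ : ℕ) :
    ∀ (k : ℕ) (c : Fin Δ ⊕ Fin Δ → Fin k),
      ConflictFree (doubleCliqueEdges Δ) c → Δ + 1 ≤ k := by
  intro k c hc
  by_contra! hk
  have hl := hc.injective_comp_of_pair_mem Sum.inl_injective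
    fun _ _ => inl_pair_mem_doubleCliqueEdges
  have hr := hc.injective_comp_of_pair_mem Sum.inr_injective
    fun _ _ => inr_pair_mem_doubleCliqueEdges
  obtain ⟨v, -, huniq⟩ := hc _ (univ_mem_doubleCliqueEdges Δ)
  obtain ⟨w, hwv, hw⟩ := exists_ne_apply_eq_of_surjective_comp (fun _ _ => Sum.inl_ne_inr)
    (Fin.surjective_of_injective_of_le hl (by omega))
    (Fin.surjective_of_injective_of_le hr (by omega)) v
  exact hwv (huniq w (Finset.mem_univ w) hw)
end

section
/- Every connected r-uniform hypergraph H with at least one edge contains a set S of r−1 vertices, all lying in a single hyperedge, such that the hypergraph H − S (obtained by deleting S from the vertex set and from each hyperedge) is connected. -/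
/-!
Two vertices of `H − S` lie in a common hyperedge exactly when they are adjacent in the
2-section graph of `H`, so `H − S` is connected as soon as the 2-section induced on the
surviving vertices is (by uniformity no hyperedge becomes empty). More generally, for every
finite vertex set `s` inducing a connected subgraph of the 2-section there are a hyperedge `e`
and `v ∈ e ∩ s` such that `s \ (e \ {v})` still induces a connected subgraph. By induction on
`s`: remove a non-cut vertex `x` and take `(e, v)` for `s \ {x}`. If `x ∈ e`, or `x` has a
neighbour surviving `e \ {v}`, then `(e, v)` also works for `s`. Otherwise every neighbour of
`x` lies in `e`, and a hyperedge `f` through `x` and a neighbour `u` works with `u`: deleting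
`f \ {u}` only removes `x` and vertices of `e \ {v}`, and those survivors of `e` are adjacent
to `v`.
-/

/-- A hypergraph (given by its edge set) is connected if any two hyperedges
are joined by a path of hyperedges in which consecutive edges intersect. -/
def HypConn {V : Type} [DecidableEq V] (E : Finset (Finset V)) : Prop :=
  ∀ e ∈ E, ∀ e' ∈ E,
    Relation.ReflTransGen (fun a b => a ∈ E ∧ b ∈ E ∧ (a ∩ b).Nonempty) e e'

namespace SimpleGraph

variable {V : Type*} {G : SimpleGraph V}

lemma Connected.exists_preconnected_induce_diff_singleton {s : Set V} [Finite s]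
    (h : (G.induce s).Connected) : ∃ x ∈ s, (G.induce (s \ {x})).Preconnected := by
  obtain ⟨x, hx⟩ := h.exists_preconnected_induce_compl_singleton_of_finite
  let f : (G.induce s).induce {x}ᶜ →g G.induce (s \ {x.1}) :=
    { toFun a := ⟨a.1.1, a.1.2, fun h => a.2 (Subtype.ext h)⟩
      map_rel' h := h }
  exact ⟨x, x.2, hx.map f fun a => ⟨⟨⟨a.1, a.2.1⟩, fun h => a.2.2 (congrArg Subtype.val h)⟩, rfl⟩⟩

lemma connected_induce_insert_of_adj {s : Set V} (hs : (G.induce s).Preconnected) {x u : V}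
    (hu : u ∈ s) (hxu : G.Adj x u) : (G.induce (insert x s)).Connected := by
  rw [Set.insert_eq]
  exact connected_induce_union .of_subsingleton hs rfl hu hxu

lemma connected_induce_of_forall_adj {s t : Set V} (ht : (G.induce t).Preconnected)
    (hts : t ⊆ s) {v : V} (hv : v ∈ t) (hadj : ∀ w ∈ s \ t, G.Adj v w) :
    (G.induce s).Connected := by
  refine induce_connected_of_patches v (hts hv) fun {w} hw => ?_
  by_cases hwt : w ∈ t
  · exact ⟨t, hts, hv, hwt, ht _ _⟩
  · exact ⟨{v, w}, Set.insert_subset (hts hv) (Set.singleton_subset_iff.mpr hw), by simp, by simp,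
      induce_pair_connected_of_adj (hadj w ⟨hw, hwt⟩) _ _⟩

end SimpleGraph

open SimpleGraph Finset

def twoSection {V : Type*} (E : Finset (Finset V)) : SimpleGraph V where
  Adj a b := a ≠ b ∧ ∃ e ∈ E, a ∈ e ∧ b ∈ e
  symm := ⟨fun _ _ ⟨hab, e, he, ha, hb⟩ => ⟨hab.symm, e, he, hb, ha⟩⟩
  loopless := ⟨fun _ h => h.1 rfl⟩

section TwoSection

variable {V : Type*} [DecidableEq V] {E : Finset (Finset V)}

lemma connected_induce_sdiff_erase_of_not_adj {s e f : Finset V} {x u v : V} (he : e ∈ E)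
    (hve : v ∈ e) (hvs : v ∈ s.erase x)
    (ht : ((twoSection E).induce ↑(s.erase x \ e.erase v)).Preconnected)
    (hxt : ∀ w ∈ s.erase x \ e.erase v, ¬(twoSection E).Adj x w)
    (hf : f ∈ E) (hxf : x ∈ f) (hxu : x ≠ u) :
    ((twoSection E).induce ↑(s \ f.erase u)).Connected := by
  refine connected_induce_of_forall_adj ht ?_ (v := v) ?_ ?_
  · intro w hwt
    obtain ⟨hwsx, -⟩ := mem_sdiff.mp hwt
    exact mem_sdiff.mpr ⟨mem_of_mem_erase hwsx, fun hwf =>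
      hxt w hwt ⟨(ne_of_mem_erase hwsx).symm, f, hf, hxf, mem_of_mem_erase hwf⟩⟩
  · exact mem_sdiff.mpr ⟨hvs, fun h => ne_of_mem_erase h rfl⟩
  · rintro w ⟨hw, hwt⟩
    obtain ⟨hws, hwf⟩ := mem_sdiff.mp hw
    have hwx : w ≠ x := by
      rintro rfl
      exact hwf (mem_erase.mpr ⟨hxu, hxf⟩)
    have hwe : w ∈ e.erase v := by
      by_contra h
      exact hwt (mem_sdiff.mpr ⟨mem_erase.mpr ⟨hwx, hws⟩, h⟩)
    exact ⟨(ne_of_mem_erase hwe).symm, e, he, hve, mem_of_mem_erase hwe⟩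

theorem exists_connected_induce_twoSection_sdiff_erase (s : Finset V) (hsE : s ⊆ E.sup id)
    (hs : ((twoSection E).induce (s : Set V)).Connected) :
    ∃ e ∈ E, ∃ v ∈ e, v ∈ s ∧ ((twoSection E).induce ↑(s \ e.erase v)).Connected := by
  induction s using Finset.strongInduction with
  | H s ih =>
  obtain ⟨x, hxs, hx⟩ := hs.exists_preconnected_induce_diff_singleton
  rw [← coe_erase] at hx
  rcases (s.erase x).eq_empty_or_nonempty with hsx | ⟨y, hy⟩
  · obtain ⟨e, he, hxe⟩ := mem_sup.mp (hsE hxs)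
    refine ⟨e, he, x, hxe, hxs, ?_⟩
    rwa [sdiff_eq_self_of_disjoint (disjoint_left.mpr fun a ha hae =>
      (eq_empty_iff_forall_notMem.mp hsx) a (mem_erase.mpr ⟨ne_of_mem_erase hae, ha⟩))]
  obtain ⟨e, he, v, hve, hvs, ht⟩ := ih (s.erase x) (erase_ssubset hxs)
    ((erase_subset x s).trans hsE) ((connected_iff _).mpr ⟨hx, ⟨⟨y, hy⟩⟩⟩)
  have hvx : v ≠ x := ne_of_mem_erase hvs
  by_cases hxe : x ∈ e
  · have : s \ e.erase v = s.erase x \ e.erase v := by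
      ext a; simp only [mem_sdiff, mem_erase]; grind
    exact ⟨e, he, v, hve, mem_of_mem_erase hvs, this ▸ ht⟩
  have hst : s \ e.erase v = insert x (s.erase x \ e.erase v) := by
    ext a; simp only [mem_sdiff, mem_erase, mem_insert]; grind
  by_cases hxt : ∃ w ∈ s.erase x \ e.erase v, (twoSection E).Adj x w
  · obtain ⟨w, hwt, hxw⟩ := hxt
    refine ⟨e, he, v, hve, mem_of_mem_erase hvs, ?_⟩
    rw [hst, coe_insert]
    exact connected_induce_insert_of_adj ht.preconnected hwt hxw
  push Not at hxt
  have : Nontrivial (s : Set V) :=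
    nontrivial_of_ne ⟨x, hxs⟩ ⟨y, mem_of_mem_erase hy⟩ (by simpa using (ne_of_mem_erase hy).symm)
  obtain ⟨⟨u, hus⟩, hadj⟩ := hs.preconnected.exists_adj_of_nontrivial ⟨x, hxs⟩
  obtain ⟨hxu, f, hf, hxf, huf⟩ : (twoSection E).Adj x u := hadj
  exact ⟨f, hf, u, huf, hus,
    connected_induce_sdiff_erase_of_not_adj he hve hvs ht.preconnected hxt hf hxf hxu⟩

end TwoSection

section HypConn

variable {V : Type} [DecidableEq V] {E : Finset (Finset V)}

lemma HypConn.preconnected_induce_twoSection (h : HypConn E) :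
    ((twoSection E).induce ↑(E.sup id)).Preconnected := by
  have hstep {e : Finset V} (he : e ∈ E) {a b : V} (ha : a ∈ e) (hb : b ∈ e)
      (haU : a ∈ ((E.sup id : Finset V) : Set V)) (hbU : b ∈ ((E.sup id : Finset V) : Set V)) :
      ((twoSection E).induce ↑(E.sup id)).Reachable ⟨a, haU⟩ ⟨b, hbU⟩ := by
    by_cases hab : a = b
    · subst hab; rfl
    · exact Adj.reachable ⟨hab, e, he, ha, hb⟩
  rintro ⟨a, haU⟩ ⟨b, hbU⟩
  obtain ⟨e, he, ha⟩ := mem_sup.mp haU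
  obtain ⟨f, hf, hb⟩ := mem_sup.mp hbU
  induction h e he f hf generalizing b with
  | refl => exact hstep he ha hb haU hbU
  | tail _ hlm ih =>
    obtain ⟨hl, hm, w, hw⟩ := hlm
    obtain ⟨hwl, hwm⟩ := mem_inter.mp hw
    have hwU : w ∈ ((E.sup id : Finset V) : Set V) := mem_sup.mpr ⟨_, hl, hwl⟩
    exact (ih w hwU hl hwl).trans (hstep hm hwm hb hwU hbU)

lemma hypConn_image_sdiff_of_preconnected {S : Finset V} (hne : ∀ e ∈ E, (e \ S).Nonempty)
    (h : ((twoSection E).induce ↑(E.sup id \ S)).Preconnected) : HypConn (E.image (· \ S)) := by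
  simp only [HypConn, forall_mem_image]
  intro f hf g hg
  obtain ⟨a, ha⟩ := hne f hf
  obtain ⟨b, hb⟩ := hne g hg
  have hU {e : Finset V} (he : e ∈ E) {a : V} (ha : a ∈ e \ S) :
      a ∈ (↑(E.sup id \ S) : Set V) :=
    mem_sdiff.mpr ⟨mem_sup.mpr ⟨e, he, (mem_sdiff.mp ha).1⟩, (mem_sdiff.mp ha).2⟩
  suffices ∀ z, Relation.ReflTransGen ((twoSection E).induce ↑(E.sup id \ S)).Adj
      ⟨a, hU hf ha⟩ z → ∀ g ∈ E, z.1 ∈ g → Relation.ReflTransGen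
        (fun p q => p ∈ E.image (· \ S) ∧ q ∈ E.image (· \ S) ∧ (p ∩ q).Nonempty)
        (f \ S) (g \ S) from
    this _ ((reachable_iff_reflTransGen _ _).mp (h _ ⟨b, hU hg hb⟩)) g hg (mem_sdiff.mp hb).1
  intro z hz
  induction hz with
  | refl => exact fun g hg hag => .single ⟨mem_image_of_mem _ hf, mem_image_of_mem _ hg, a,
      mem_inter.mpr ⟨ha, mem_sdiff.mpr ⟨hag, (mem_sdiff.mp ha).2⟩⟩⟩
  | @tail y z _ hyz ih =>
    obtain ⟨-, k, hk, hyk, hzk⟩ := hyz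
    intro g hg hzg
    have hzS : z.1 ∉ S := (mem_sdiff.mp z.2).2
    exact (ih k hk hyk).tail ⟨mem_image_of_mem _ hk, mem_image_of_mem _ hg, z,
      mem_inter.mpr ⟨mem_sdiff.mpr ⟨hzk, hzS⟩, mem_sdiff.mpr ⟨hzg, hzS⟩⟩⟩

end HypConn

theorem exists_nonseparating_set_general {V : Type} [DecidableEq V]
    (r : ℕ) (E : Finset (Finset V)) (hE : E.Nonempty)
    (huniform : ∀ e ∈ E, e.card = r)
    (hconn : HypConn E) :
    ∃ (e : Finset V) (S : Finset V), e ∈ E ∧ S ⊆ e ∧ S.card = r - 1 ∧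
      HypConn (E.image (fun f => f \ S)) := by
  obtain ⟨e₀, he₀⟩ := hE
  rcases Nat.eq_zero_or_pos r with rfl | hr
  · exact ⟨e₀, ∅, he₀, empty_subset _, rfl, by simpa using hconn⟩
  obtain ⟨a, ha⟩ : e₀.Nonempty := card_pos.mp (huniform e₀ he₀ ▸ hr)
  have hU : ((twoSection E).induce ↑(E.sup id)).Connected :=
    (connected_iff _).mpr ⟨hconn.preconnected_induce_twoSection, ⟨⟨a, mem_sup.mpr ⟨e₀, he₀, ha⟩⟩⟩⟩
  obtain ⟨e, he, v, hve, -, hS⟩ := exists_connected_induce_twoSection_sdiff_erase _ subset_rfl hU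
  refine ⟨e, e.erase v, he, erase_subset v e, by rw [card_erase_of_mem hve, huniform e he],
    hypConn_image_sdiff_of_preconnected (fun f hf => sdiff_nonempty.mpr fun hsub => ?_)
      hS.preconnected⟩
  have := card_le_card hsub
  rw [huniform f hf, card_erase_of_mem hve, huniform e he] at this
  omega

/-- Every connected `r`-uniform hypergraph with at least one edge contains a
set `S` of `r - 1` vertices inside a single hyperedge such that deleting `S`
(from the vertex set and from each hyperedge) leaves a connected hypergraph. -/
theorem exists_nonseparating_set {V : Type} [Fintype V] [DecidableEq V]
    (r : ℕ) (E : Finset (Finset V)) (hE : E.Nonempty)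
    (huniform : ∀ e ∈ E, e.card = r)
    (hconn : HypConn E) :
    ∃ (e : Finset V) (S : Finset V), e ∈ E ∧ S ⊆ e ∧ S.card = r - 1 ∧
      HypConn (E.image (fun f => f \ S)) :=
  exists_nonseparating_set_general r E hE huniform hconn
end

section
/- Every 4-uniform hypergraph with maximum degree 3 has a conflict-free coloring with at most 3 colors; consequently, every 4-uniform hypergraph with maximum degree Δ ≥ 3 has a conflict-free coloring with at most Δ colors. -/
/-!
A connected 4-uniform hypergraph has an edge `e` and a vertex `d ∈ e` such that the vertices
outside `e \ {d}` still form a connected set. Give the three vertices of `e \ {d}` distinct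
colors, then color the remaining vertices one at a time, each time choosing a vertex other than
`d` whose removal keeps the uncolored vertices connected, so that `d` comes last. When a vertex
`v` is colored, the edges through `v` whose other vertices are already colored must get a uniquely
colored vertex, and each of them rules out at most one color for `v` because it has only four
vertices. There are at most `Δ - 1` such edges: `v` still shares an edge with an uncolored vertex,
and for `d` the edge `e` is harmless because `e \ {d}` is rainbow. Components are colored
separately.
-/

namespace Relation

variable {α : Type*} {r r' : α → α → Prop} {A B : Finset α} {a b s : α}

def ReachableIn (r : α → α → Prop) (A : Finset α) : α → α → Prop :=
  ReflTransGen fun a b => a ∈ A ∧ b ∈ A ∧ r a b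

def IsConnectedOn (r : α → α → Prop) (A : Finset α) : Prop :=
  ∀ a ∈ A, ∀ b ∈ A, ReachableIn r A a b

theorem ReachableIn.mono (hAB : A ⊆ B) (hr : ∀ a b, r a b → r' a b) (h : ReachableIn r A a b) :
    ReachableIn r' B a b :=
  ReflTransGen.mono (fun _ _ ⟨ha, hb, hab⟩ => ⟨hAB ha, hAB hb, hr _ _ hab⟩) _ _ h

theorem ReachableIn.symm (hr : ∀ ⦃a b⦄, r a b → r b a) (h : ReachableIn r A a b) :
    ReachableIn r A b a :=
  ReflTransGen.mono (fun _ _ ⟨ha, hb, hab⟩ => ⟨hb, ha, hr hab⟩) _ _ (ReflTransGen.swap _ _ h)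

theorem isConnectedOn_singleton (a : α) : IsConnectedOn r {a} := by
  intro x hx y hy
  rw [Finset.mem_singleton] at hx hy
  subst hx hy
  exact ReflTransGen.refl

theorem IsConnectedOn.mono (hr : ∀ a b, r a b → r' a b) (h : IsConnectedOn r A) :
    IsConnectedOn r' A :=
  fun a ha b hb => (h a ha b hb).mono subset_rfl hr

theorem IsConnectedOn.of_subset (hr : ∀ ⦃a b⦄, r a b → r b a) (hB : IsConnectedOn r B)
    (hBA : B ⊆ A) (hs : s ∈ B) (hA : ∀ w ∈ A, w ∉ B → r w s) : IsConnectedOn r A := by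
  have hub : ∀ w ∈ A, ReachableIn r A w s := fun w hw => by
    by_cases hwB : w ∈ B
    · exact (hB w hwB s hs).mono hBA fun _ _ h => h
    · exact ReflTransGen.single ⟨hw, hBA hs, hA w hw hwB⟩
  exact fun a ha b hb => (hub a ha).trans ((hub b hb).symm hr)

theorem IsConnectedOn.exists_rel_of_ssubset (hA : IsConnectedOn r A) (hBA : B ⊂ A) (hb : b ∈ B) :
    ∃ y ∈ B, ∃ x ∈ A, x ∉ B ∧ r y x := by
  obtain ⟨z, hzA, hzB⟩ := Finset.exists_of_ssubset hBA
  have key : ∀ z, ReachableIn r A b z → z ∈ B ∨ ∃ y ∈ B, ∃ x ∈ A, x ∉ B ∧ r y x := by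
    intro z hz
    induction hz with
    | refl => exact Or.inl hb
    | @tail y x _ hyx ih =>
      refine ih.elim (fun hyB => ?_) Or.inr
      by_cases hxB : x ∈ B
      · exact Or.inl hxB
      · exact Or.inr ⟨y, hyB, x, hyx.2.1, hxB, hyx.2.2⟩
  exact (key z (hA b (hBA.subset hb) z hzA)).resolve_left hzB

theorem IsConnectedOn.exists_erase [DecidableEq α] (hr : ∀ ⦃a b⦄, r a b → r b a)
    (hA : IsConnectedOn r A) (ha : a ∈ A) (hA1 : A ≠ {a}) :
    ∃ x ∈ A, x ≠ a ∧ IsConnectedOn r (A.erase x) ∧ ∃ y ∈ A.erase x, r x y := by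
  classical
  set S := A.powerset.filter fun B => a ∈ B ∧ B ≠ A ∧ IsConnectedOn r B
  have haS : {a} ∈ S := by
    simpa [S, ha, Ne.symm hA1] using isConnectedOn_singleton a
  obtain ⟨B, hBS, hBmax⟩ := S.exists_max_image Finset.card ⟨_, haS⟩
  simp only [S, Finset.mem_filter, Finset.mem_powerset] at hBS
  obtain ⟨hBA, haB, hBne, hB⟩ := hBS
  obtain ⟨y, hyB, x, hxA, hxB, hyx⟩ :=
    hA.exists_rel_of_ssubset (Finset.ssubset_iff_subset_ne.2 ⟨hBA, hBne⟩) haB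
  have hxB' : IsConnectedOn r (insert x B) :=
    hB.of_subset hr (Finset.subset_insert x B) hyB fun w hw hwB => by
      rw [Finset.eq_of_mem_insert_of_notMem hw hwB]; exact hr hyx
  have hxBA : insert x B = A := by
    by_contra hne
    have := hBmax (insert x B) (by
      simp [S, Finset.insert_subset_iff, hxA, hBA, haB, hne, hxB'])
    rw [Finset.card_insert_of_notMem hxB] at this
    omega
  have hAx : A.erase x = B := by rw [← hxBA, Finset.erase_insert hxB]
  exact ⟨x, hxA, fun h => hxB (h ▸ haB), hAx ▸ hB, y, hAx ▸ hyB, hr hyx⟩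

theorem isConnectedOn_filter_reachableIn (hr : ∀ ⦃a b⦄, r a b → r b a)
    [DecidablePred (ReachableIn r A a)] :
    IsConnectedOn r (A.filter (ReachableIn r A a)) := by
  have hub : ∀ z, ReachableIn r A a z → ReachableIn r (A.filter (ReachableIn r A a)) a z := by
    intro z hz
    induction hz with
    | refl => exact ReflTransGen.refl
    | @tail y z hay hyz ih =>
      refine ih.tail ⟨?_, ?_, hyz.2.2⟩ <;> rw [Finset.mem_filter]
      exacts [⟨hyz.1, hay⟩, ⟨hyz.2.1, hay.tail hyz⟩]
  intro x hx y hy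
  rw [Finset.mem_filter] at hx hy
  exact ((hub x hx.2).symm hr).trans (hub y hy.2)

end Relation

namespace FinHypergraph

open Function Relation

section

variable {V α : Type} {E E' : Finset (Finset V)} {f : Finset V} {u v : V}

def Adj (E : Finset (Finset V)) (u v : V) : Prop := ∃ f ∈ E, u ∈ f ∧ v ∈ f

theorem Adj.symm (h : Adj E u v) : Adj E v u :=
  let ⟨f, hf, hu, hv⟩ := h; ⟨f, hf, hv, hu⟩

theorem Adj.mono (h : E' ⊆ E) (huv : Adj E' u v) : Adj E u v :=
  let ⟨f, hf, hu, hv⟩ := huv; ⟨f, h hf, hu, hv⟩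

def HasUniqueColor (c : V → α) (f : Finset V) : Prop :=
  ∃ v ∈ f, ∀ w ∈ f, c w = c v → w = v

theorem HasUniqueColor.congr {c c' : V → α} (h : HasUniqueColor c f)
    (hcc' : ∀ w ∈ f, c w = c' w) : HasUniqueColor c' f := by
  obtain ⟨v, hv, hvu⟩ := h
  exact ⟨v, hv, fun w hw hcw => hvu w hw (by rwa [hcc' w hw, hcc' v hv])⟩

theorem exists_ne_color_eq_of_not_hasUniqueColor {c : V → α} (h : ¬HasUniqueColor c f) {w : V}
    (hw : w ∈ f) : ∃ t ∈ f, t ≠ w ∧ c t = c w := by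
  by_contra! h'
  exact h ⟨w, hw, fun t ht hct => not_not.1 fun htw => h' t ht htw hct⟩

end

variable {V α : Type} [DecidableEq V] {E E' : Finset (Finset V)} {e f : Finset V} {v : V}

def support (E : Finset (Finset V)) : Finset V := E.sup id

theorem mem_support : v ∈ support E ↔ ∃ f ∈ E, v ∈ f := by
  simp [support]

theorem subset_support (hf : f ∈ E) : f ⊆ support E := fun _ hv => mem_support.2 ⟨f, hf, hv⟩

theorem support_mono (h : E' ⊆ E) : support E' ⊆ support E := Finset.sup_mono h

theorem mem_support_erase_or_mem (hv : v ∈ support E) (e : Finset V) :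
    v ∈ support (E.erase e) ∨ v ∈ e := by
  obtain ⟨f, hf, hvf⟩ := mem_support.1 hv
  by_cases hfe : f = e
  · exact Or.inr (hfe ▸ hvf)
  · exact Or.inl (mem_support.2 ⟨f, Finset.mem_erase.2 ⟨hfe, hf⟩, hvf⟩)

theorem exists_separator (hE : ∀ f ∈ E, f.Nonempty) (hne : E.Nonempty)
    (hconn : IsConnectedOn (fun f g => ¬Disjoint f g) E) :
    ∃ e ∈ E, ∃ d ∈ e, IsConnectedOn (Adj E) (support E \ e.erase d) := by
  induction E using Finset.strongInduction with
  | H E ih =>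
    obtain ⟨e, rfl⟩ | hnt := hne.exists_eq_singleton_or_nontrivial
    · obtain ⟨d, hd⟩ := hE e (Finset.mem_singleton_self e)
      refine ⟨e, Finset.mem_singleton_self e, d, hd, ?_⟩
      rw [support, Finset.sup_singleton, id, Finset.sdiff_erase_self hd]
      exact isConnectedOn_singleton d
    obtain ⟨a, ha⟩ := hne
    obtain ⟨e₀, he₀, -, hconn', g, hg, he₀g⟩ :=
      hconn.exists_erase (fun f g h => by rwa [disjoint_comm]) ha hnt.ne_singleton
    set E' := E.erase e₀
    have hE'E : E' ⊆ E := Finset.erase_subset e₀ E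
    obtain ⟨f, hf, d', hd', hW'⟩ := ih E' (Finset.erase_ssubset he₀)
      (fun f hf => hE f (hE'E hf)) ⟨g, hg⟩ hconn'
    have hW'E := hW'.mono fun _ _ => Adj.mono hE'E
    have hd'W' : d' ∈ support E' \ f.erase d' := by simp [subset_support hf hd']
    by_cases hB : e₀ ∩ support E' ⊆ f.erase d'
    · -- `e₀` meets the rest only inside `f.erase d'`: cut `e₀` instead, keeping a vertex of `g`
      obtain ⟨b, hbe₀, hbg⟩ := Finset.not_disjoint_iff.1 he₀g
      have hbf : b ∈ f.erase d' := hB (Finset.mem_inter.2 ⟨hbe₀, subset_support hg hbg⟩)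
      refine ⟨e₀, he₀, b, hbe₀, hW'E.of_subset (fun _ _ => Adj.symm) ?_ hd'W' ?_⟩
      · intro w hw
        rw [Finset.mem_sdiff] at hw ⊢
        exact ⟨support_mono hE'E hw.1, fun hwe₀ =>
          hw.2 (hB (Finset.mem_inter.2 ⟨Finset.mem_of_mem_erase hwe₀, hw.1⟩))⟩
      · intro w hw hwW'
        rw [Finset.mem_sdiff] at hw hwW'
        have hwf : w ∈ f.erase d' := by
          rcases mem_support_erase_or_mem hw.1 e₀ with hwE' | hwe₀
          · exact not_not.1 fun h => hwW' ⟨hwE', h⟩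
          · by_cases hwb : w = b
            · exact hwb ▸ hbf
            · exact absurd (Finset.mem_erase.2 ⟨hwb, hwe₀⟩) hw.2
        exact ⟨f, hE'E hf, Finset.mem_of_mem_erase hwf, hd'⟩
    · obtain ⟨s, hs, hsf⟩ := Finset.not_subset.1 hB
      rw [Finset.mem_inter] at hs
      refine ⟨f, hE'E hf, d', hd', hW'E.of_subset (fun _ _ => Adj.symm) ?_ (s := s) ?_ ?_⟩
      · exact Finset.sdiff_subset_sdiff (support_mono hE'E) subset_rfl
      · exact Finset.mem_sdiff.2 ⟨hs.2, hsf⟩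
      · intro w hw hwW'
        rw [Finset.mem_sdiff] at hw hwW'
        have hwE' : w ∉ support E' := fun h => hwW' ⟨h, hw.2⟩
        exact ⟨e₀, he₀, (mem_support_erase_or_mem hw.1 e₀).resolve_left hwE', hs.1⟩

theorem hasUniqueColor_update_of_injOn {c : V → α} (hc : Set.InjOn c (f.erase v))
    (hf : 1 < (f.erase v).card) (x : α) : HasUniqueColor (update c v x) f := by
  obtain ⟨w₁, hw₁, w₂, hw₂, hw₁₂⟩ := Finset.one_lt_card.1 hf
  obtain ⟨w, hw, hwx⟩ : ∃ w ∈ f.erase v, c w ≠ x := by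
    by_contra! h
    exact hw₁₂ (hc hw₁ hw₂ ((h w₁ hw₁).trans (h w₂ hw₂).symm))
  refine ⟨w, Finset.mem_of_mem_erase hw, fun t ht htw => ?_⟩
  rw [update_of_ne (Finset.ne_of_mem_erase hw)] at htw
  by_cases htv : t = v
  · subst htv
    exact absurd (htw.symm.trans (update_self ..)) hwx
  · rw [update_of_ne htv] at htw
    exact hc (Finset.mem_erase.2 ⟨htv, ht⟩) hw htw

theorem subsingleton_setOf_not_hasUniqueColor_update (hf : f.card ≤ 4) (hv : v ∈ f) (c : V → α) :
    {x | ¬HasUniqueColor (update c v x) f}.Subsingleton := by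
  intro x hx y hy
  by_contra hxy
  obtain ⟨t₁, ht₁, ht₁v, hct₁⟩ := exists_ne_color_eq_of_not_hasUniqueColor hx hv
  obtain ⟨t₂, ht₂, ht₂v, hct₂⟩ := exists_ne_color_eq_of_not_hasUniqueColor hy hv
  rw [update_self, update_of_ne ht₁v] at hct₁
  rw [update_self, update_of_ne ht₂v] at hct₂
  obtain ⟨t₃, ht₃, ht₃₂, hct₃⟩ := exists_ne_color_eq_of_not_hasUniqueColor hx ht₂
  obtain ⟨t₄, ht₄, ht₄₁, hct₄⟩ := exists_ne_color_eq_of_not_hasUniqueColor hy ht₁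
  rw [update_of_ne ht₂v, hct₂] at hct₃
  rw [update_of_ne ht₁v, hct₁] at hct₄
  have ht₃v : t₃ ≠ v := by rintro rfl; exact hxy (by rwa [update_self] at hct₃)
  have ht₄v : t₄ ≠ v := by rintro rfl; exact hxy (by rwa [update_self, eq_comm] at hct₄)
  rw [update_of_ne ht₃v] at hct₃
  rw [update_of_ne ht₄v] at hct₄
  -- `t₁, t₄` have color `x` and `t₂, t₃` have color `y`: with `v`, five distinct vertices of `f`
  have hxy' : ∀ {p q}, c p = x → c q = y → p ≠ q := fun hp hq hpq => hxy (by rw [← hp, hpq, hq])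
  have h5 : ({v, t₁, t₄, t₂, t₃} : Finset V).card = 5 := by
    simp [Finset.card_insert_of_notMem, ht₁v.symm, ht₂v.symm, ht₃v.symm, ht₄v.symm, ht₄₁.symm,
      ht₃₂.symm, hxy' hct₁ hct₂, hxy' hct₁ hct₃, hxy' hct₄ hct₂, hxy' hct₄ hct₃]
  have := Finset.card_le_card (s := {v, t₁, t₄, t₂, t₃}) (t := f) (by
    simp [Finset.insert_subset_iff, hv, ht₁, ht₂, ht₃, ht₄])
  omega

theorem hypDeg_mono (h : E' ⊆ E) (v : V) : hypDeg E' v ≤ hypDeg E v :=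
  Finset.card_le_card (Finset.filter_subset_filter _ h)

theorem card_lt_hypDeg {F : Finset (Finset V)} {g : Finset V} (hF : ∀ f ∈ F, f ∈ E ∧ v ∈ f)
    (hg : g ∈ E) (hvg : v ∈ g) (hgF : g ∉ F) : F.card < hypDeg E v :=
  Finset.card_lt_card <| Finset.ssubset_iff_subset_ne.2
    ⟨fun f hf => Finset.mem_filter.2 (hF f hf),
      fun h => hgF (h ▸ Finset.mem_filter.2 ⟨hg, hvg⟩)⟩

theorem exists_update_conflictFree [Fintype α] (hE : ∀ f ∈ E, f.card ≤ 4) {A : Finset V}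
    {c : V → α} (hc : ConflictFree (E.filter (Disjoint · A)) c)
    (hcard : (E.filter fun f => v ∈ f ∧ Disjoint f (A.erase v)).card < Fintype.card α) :
    ∃ x, ConflictFree (E.filter (Disjoint · (A.erase v))) (update c v x) := by
  classical
  set F := E.filter fun f => v ∈ f ∧ Disjoint f (A.erase v)
  set bad := F.biUnion fun f => Finset.univ.filter fun x => ¬HasUniqueColor (update c v x) f
  have hbad : bad.card < Fintype.card α := by
    refine (Finset.card_biUnion_le_card_mul F _ 1 fun f hf => ?_).trans_lt (by rwa [mul_one])
    obtain ⟨hfE, hvf, -⟩ := Finset.mem_filter.1 hf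
    exact Finset.card_le_one.2 fun x hx y hy =>
      subsingleton_setOf_not_hasUniqueColor_update (hE f hfE) hvf c
        (Finset.mem_filter.1 hx).2 (Finset.mem_filter.1 hy).2
  obtain ⟨x, -, hx⟩ := Finset.exists_mem_notMem_of_card_lt_card (t := Finset.univ) hbad
  refine ⟨x, fun f hf => ?_⟩
  obtain ⟨hfE, hfA⟩ := Finset.mem_filter.1 hf
  by_cases hvf : v ∈ f
  · by_contra hbad'
    exact hx (Finset.mem_biUnion.2 ⟨f, Finset.mem_filter.2 ⟨hfE, hvf, hfA⟩,
      Finset.mem_filter.2 ⟨Finset.mem_univ x, hbad'⟩⟩)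
  · have hfA' : Disjoint f A := Finset.disjoint_left.2 fun w hwf hwA =>
      Finset.disjoint_left.1 hfA hwf (Finset.mem_erase.2 ⟨ne_of_mem_of_not_mem hwf hvf, hwA⟩)
    exact HasUniqueColor.congr (hc f (Finset.mem_filter.2 ⟨hfE, hfA'⟩)) fun w hw =>
      (update_of_ne (ne_of_mem_of_not_mem hw hvf) x c).symm

theorem exists_conflictFree_of_rainbow_of_isConnectedOn [Fintype α] (hE : ∀ f ∈ E, f.card ≤ 4)
    (hdeg : ∀ v, hypDeg E v ≤ Fintype.card α) (he : e ∈ E) {d : V} (hd : d ∈ e)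
    (he₁ : 1 < (e.erase d).card) (A : Finset V) (hdA : d ∈ A) (hA : IsConnectedOn (Adj E) A)
    (hAe : Disjoint A (e.erase d)) (c : V → α) (hc : Set.InjOn c (e.erase d))
    (hcA : ConflictFree (E.filter (Disjoint · A)) c) : ∃ c' : V → α, ConflictFree E c' := by
  induction A using Finset.strongInduction generalizing c with
  | H A ih =>
    by_cases hAd : A = {d}
    · subst hAd
      obtain ⟨x, hx⟩ := exists_update_conflictFree (E := E.erase e) (v := d)
        (fun f hf => hE f (Finset.mem_of_mem_erase hf))
        (fun f hf => hcA f (Finset.filter_subset_filter _ (Finset.erase_subset e E) hf)) <|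
        (card_lt_hypDeg (fun f hf => by simp at hf; exact ⟨hf.1.2, hf.2⟩) he hd (by simp)).trans_le
          (hdeg d)
      refine ⟨update c d x, fun f hf => ?_⟩
      by_cases hfe : f = e
      · exact hfe ▸ hasUniqueColor_update_of_injOn hc he₁ x
      · exact hx f (by simp [hf, hfe])
    obtain ⟨v, hvA, hvd, hA', u, hu, g, hg, hvg, hug⟩ :=
      hA.exists_erase (fun _ _ => Adj.symm) hdA hAd
    have hcard := card_lt_hypDeg (F := E.filter fun f => v ∈ f ∧ Disjoint f (A.erase v))
      (fun f hf => ⟨(Finset.mem_filter.1 hf).1, (Finset.mem_filter.1 hf).2.1⟩) hg hvg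
      (by simpa using fun _ _ hgA => Finset.disjoint_left.1 hgA hug hu)
    obtain ⟨x, hx⟩ := exists_update_conflictFree hE hcA (hcard.trans_le (hdeg v))
    have hve : v ∉ e.erase d := Finset.disjoint_left.1 hAe hvA
    exact ih (A.erase v) (Finset.erase_ssubset hvA) (Finset.mem_erase.2 ⟨hvd.symm, hdA⟩) hA'
      (Finset.disjoint_of_subset_left (Finset.erase_subset v A) hAe) (update c v x)
      (hc.congr fun w hw => (update_of_ne (ne_of_mem_of_not_mem hw hve) x c).symm) hx

theorem conflictFree_union_piecewise {E₁ E₂ : Finset (Finset V)} {c₁ c₂ : V → α}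
    (h₁ : ConflictFree E₁ c₁) (h₂ : ConflictFree E₂ c₂)
    (hE : ∀ f ∈ E₂, Disjoint f (support E₁)) :
    ConflictFree (E₁ ∪ E₂) ((support E₁).piecewise c₁ c₂) := by
  intro f hf
  rcases Finset.mem_union.1 hf with hf | hf
  · exact HasUniqueColor.congr (h₁ f hf) fun w hw =>
      (Finset.piecewise_eq_of_mem _ _ _ (subset_support hf hw)).symm
  · exact HasUniqueColor.congr (h₂ f hf) fun w hw =>
      (Finset.piecewise_eq_of_notMem _ _ _ (Finset.disjoint_left.1 (hE f hf) hw)).symm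

theorem exists_conflictFree_of_isConnectedOn [Fintype α] (hE : ∀ f ∈ E, f.card = 4)
    (hdeg : ∀ v, hypDeg E v ≤ Fintype.card α) (hα : 3 ≤ Fintype.card α) (hne : E.Nonempty)
    (hconn : IsConnectedOn (fun f g => ¬Disjoint f g) E) : ∃ c : V → α, ConflictFree E c := by
  obtain ⟨e, he, d, hd, hW⟩ :=
    exists_separator (fun f hf => Finset.card_pos.1 (by rw [hE f hf]; norm_num)) hne hconn
  have he3 : (e.erase d).card = 3 := by rw [Finset.card_erase_of_mem hd, hE e he]
  obtain ⟨c, hc⟩ : ∃ c : V → α, Set.InjOn c (e.erase d) := by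
    have : Nonempty α := Fintype.card_pos_iff.1 (by omega)
    obtain ⟨emb⟩ : Nonempty (e.erase d ↪ α) :=
      Function.Embedding.nonempty_of_card_le (by rwa [Fintype.card_coe, he3])
    exact Set.exists_injOn_iff_injective.2 ⟨emb, emb.injective⟩
  refine exists_conflictFree_of_rainbow_of_isConnectedOn (fun f hf => (hE f hf).le) hdeg he hd
    (by omega) _ (by simp [subset_support he hd]) hW Finset.sdiff_disjoint c hc fun f hf => ?_
  obtain ⟨hfE, hfW⟩ := Finset.mem_filter.1 hf
  have hfe : f ⊆ e.erase d := fun w hw => by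
    by_contra hwe
    exact Finset.disjoint_left.1 hfW hw (Finset.mem_sdiff.2 ⟨subset_support hfE hw, hwe⟩)
  have := Finset.card_le_card hfe
  rw [hE f hfE, he3] at this
  omega

theorem exists_conflictFree [Fintype α] (hE : ∀ f ∈ E, f.card = 4)
    (hdeg : ∀ v, hypDeg E v ≤ Fintype.card α) (hα : 3 ≤ Fintype.card α) :
    ∃ c : V → α, ConflictFree E c := by
  classical
  induction E using Finset.strongInduction with
  | H E ih =>
    obtain rfl | ⟨e₀, he₀⟩ := E.eq_empty_or_nonempty
    · have : Nonempty α := Fintype.card_pos_iff.1 (by omega)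
      exact ⟨fun _ => Classical.arbitrary α, by simp [ConflictFree]⟩
    set E₁ := E.filter (ReachableIn (fun f g => ¬Disjoint f g) E e₀)
    have hE₁ : E₁ ⊆ E := Finset.filter_subset _ _
    have he₀E₁ : e₀ ∈ E₁ := Finset.mem_filter.2 ⟨he₀, ReflTransGen.refl⟩
    obtain ⟨c₁, hc₁⟩ := exists_conflictFree_of_isConnectedOn (fun f hf => hE f (hE₁ hf))
      (fun v => (hypDeg_mono hE₁ v).trans (hdeg v)) hα ⟨e₀, he₀E₁⟩
      (isConnectedOn_filter_reachableIn fun f g h => by rwa [disjoint_comm])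
    obtain ⟨c₂, hc₂⟩ := ih (E \ E₁) (Finset.sdiff_ssubset hE₁ ⟨e₀, he₀E₁⟩)
      (fun f hf => hE f (Finset.sdiff_subset hf))
      (fun v => (hypDeg_mono Finset.sdiff_subset v).trans (hdeg v))
    have hsep : ∀ f ∈ E \ E₁, Disjoint f (support E₁) := by
      intro f hf
      rw [Finset.mem_sdiff] at hf
      refine Finset.disjoint_left.2 fun w hwf hw => hf.2 ?_
      obtain ⟨g, hg, hwg⟩ := mem_support.1 hw
      exact Finset.mem_filter.2 ⟨hf.1, (Finset.mem_filter.1 hg).2.tail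
        ⟨(Finset.mem_filter.1 hg).1, hf.1, Finset.not_disjoint_iff.2 ⟨w, hwg, hwf⟩⟩⟩
    rw [← Finset.union_sdiff_of_subset hE₁]
    exact ⟨_, conflictFree_union_piecewise hc₁ hc₂ hsep⟩

end FinHypergraph

/-- Every 4-uniform hypergraph of maximum degree at most 3 has a conflict-free
coloring with 3 colors; consequently, every 4-uniform hypergraph of maximum
degree at most `Δ`, `Δ ≥ 3`, has a conflict-free coloring with `Δ` colors. -/
theorem four_uniform_chiCF_le_maxDeg :
    (∀ (V : Type) [Fintype V] [DecidableEq V] (E : Finset (Finset V)),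
      (∀ e ∈ E, e.card = 4) → (∀ v : V, hypDeg E v ≤ 3) →
      ∃ c : V → Fin 3, ConflictFree E c) ∧
    (∀ (Δ : ℕ), 3 ≤ Δ →
      ∀ (V : Type) [Fintype V] [DecidableEq V] (E : Finset (Finset V)),
        (∀ e ∈ E, e.card = 4) → (∀ v : V, hypDeg E v ≤ Δ) →
        ∃ c : V → Fin Δ, ConflictFree E c) :=
  ⟨fun _ _ _ _ hE hdeg => FinHypergraph.exists_conflictFree hE (by simpa using hdeg) (by simp),
    fun _ hΔ _ _ _ _ hE hdeg =>
      FinHypergraph.exists_conflictFree hE (by simpa using hdeg) (by simpa using hΔ)⟩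
end

section
/- For every even r ≥ 2 there exists a 3-regular hypergraph H whose edges all have size at most r (one edge of size r, the rest of size 2) with χ_cf(H) > 3. -/
open Finset Function

lemma ConflictFree.comap {V W α : Type} {E : Finset (Finset W)} {c : W → α}
    (hc : ConflictFree E c) (f : V ↪ W) {F : Finset (Finset V)}
    (hF : ∀ e ∈ F, e.map f ∈ E) : ConflictFree F (c ∘ f) := by
  intro e he
  obtain ⟨_, hfv, huniq⟩ := hc _ (hF e he)
  obtain ⟨v, hv, rfl⟩ := mem_map.mp hfv
  exact ⟨v, hv, fun w hw hcw => f.injective (huniq _ (mem_map_of_mem f hw) hcw)⟩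

section HypDeg

variable {V W : Type} [DecidableEq V] [DecidableEq W]

lemma hypDeg_insert {E : Finset (Finset V)} {B : Finset V} (hB : B ∉ E) (v : V) :
    hypDeg (insert B E) v = hypDeg E v + if v ∈ B then 1 else 0 := by
  unfold hypDeg
  rw [filter_insert]
  split_ifs <;> simp [card_insert_of_notMem, hB]

lemma hypDeg_map (f : V ↪ W) (E : Finset (Finset V)) (v : V) :
    hypDeg (E.map (mapEmbedding f).toEmbedding) (f v) = hypDeg E v := by
  unfold hypDeg
  rw [filter_map, card_map]
  simp [comp_def]

end HypDeg

def k4MinusEdge : Finset (Finset (Fin 4)) := {{0, 2}, {0, 3}, {1, 2}, {1, 3}, {2, 3}}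

lemma card_of_mem_k4MinusEdge : ∀ e ∈ k4MinusEdge, e.card = 2 := by decide

lemma not_pair_subset_of_mem_k4MinusEdge : ∀ e ∈ k4MinusEdge, ¬ {0, 1} ⊆ e := by decide

lemma hypDeg_k4MinusEdge_add (j : Fin 4) :
    hypDeg k4MinusEdge j + (if j ∈ ({0, 1} : Finset (Fin 4)) then 1 else 0) = 3 := by
  revert j; decide

lemma apply_zero_eq_apply_one_of_conflictFree_k4MinusEdge {c : Fin 4 → Fin 3}
    (hc : ConflictFree k4MinusEdge c) : c 0 = c 1 := by
  revert c; unfold ConflictFree; decide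

section Construction

variable (ι : Type) [Fintype ι]

def bigEdge : Finset (ι × Fin 4) := univ ×ˢ {0, 1}

lemma card_bigEdge : (bigEdge ι).card = 2 * Fintype.card ι := by
  simp [bigEdge, mul_comm]

variable [DecidableEq ι]

def k4MinusEdgeCopies : Finset (Finset (ι × Fin 4)) :=
  univ.biUnion fun i => k4MinusEdge.map (mapEmbedding (Embedding.sectR i (Fin 4))).toEmbedding

def k4MinusEdgeHypergraph : Finset (Finset (ι × Fin 4)) :=
  insert (bigEdge ι) (k4MinusEdgeCopies ι)

variable {ι}

lemma mem_k4MinusEdgeCopies {e : Finset (ι × Fin 4)} :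
    e ∈ k4MinusEdgeCopies ι ↔ ∃ i, ∃ f ∈ k4MinusEdge, f.map (Embedding.sectR i (Fin 4)) = e := by
  simp [k4MinusEdgeCopies]

lemma bigEdge_notMem_k4MinusEdgeCopies : bigEdge ι ∉ k4MinusEdgeCopies ι := by
  rw [mem_k4MinusEdgeCopies]
  rintro ⟨i, f, hf, hfB⟩
  refine not_pair_subset_of_mem_k4MinusEdge f hf fun j hj => ?_
  have hij : (i, j) ∈ bigEdge ι := by simpa [bigEdge] using hj
  rw [← hfB] at hij
  simpa using hij

lemma hypDeg_k4MinusEdgeCopies (i : ι) (j : Fin 4) :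
    hypDeg (k4MinusEdgeCopies ι) (i, j) = hypDeg k4MinusEdge j := by
  have hfilter : (k4MinusEdgeCopies ι).filter (fun e => (i, j) ∈ e) =
      (k4MinusEdge.filter (fun f => j ∈ f)).map
        (mapEmbedding (Embedding.sectR i (Fin 4))).toEmbedding := by
    ext e
    simp only [mem_filter, mem_k4MinusEdgeCopies, mem_map]
    constructor
    · rintro ⟨⟨i', f, hf, rfl⟩, hj⟩
      obtain ⟨j', hj', hij⟩ := mem_map.mp hj
      simp only [Embedding.sectR_apply, Prod.mk.injEq] at hij
      obtain ⟨rfl, rfl⟩ := hij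
      exact ⟨f, ⟨hf, hj'⟩, rfl⟩
    · rintro ⟨f, ⟨hf, hj⟩, rfl⟩
      exact ⟨⟨i, f, hf, rfl⟩, mem_map_of_mem _ hj⟩
  rw [hypDeg, hypDeg, hfilter, card_map]

lemma hypDeg_k4MinusEdgeHypergraph (v : ι × Fin 4) : hypDeg (k4MinusEdgeHypergraph ι) v = 3 := by
  obtain ⟨i, j⟩ := v
  rw [k4MinusEdgeHypergraph, hypDeg_insert bigEdge_notMem_k4MinusEdgeCopies,
    hypDeg_k4MinusEdgeCopies, ← hypDeg_k4MinusEdge_add j]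
  simp [bigEdge]

lemma card_of_mem_k4MinusEdgeHypergraph {e : Finset (ι × Fin 4)}
    (he : e ∈ k4MinusEdgeHypergraph ι) : e.card = 2 ∨ e.card = 2 * Fintype.card ι := by
  rcases mem_insert.mp he with rfl | he
  · exact Or.inr (card_bigEdge ι)
  · obtain ⟨i, f, hf, rfl⟩ := mem_k4MinusEdgeCopies.mp he
    exact Or.inl ((card_map _).trans (card_of_mem_k4MinusEdge f hf))

lemma not_conflictFree_k4MinusEdgeHypergraph (c : ι × Fin 4 → Fin 3) :
    ¬ ConflictFree (k4MinusEdgeHypergraph ι) c := by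
  intro hc
  have hcopy (i : ι) : c (i, 0) = c (i, 1) :=
    apply_zero_eq_apply_one_of_conflictFree_k4MinusEdge <|
      hc.comap (Embedding.sectR i (Fin 4)) fun f hf =>
        mem_insert_of_mem (mem_k4MinusEdgeCopies.mpr ⟨i, f, hf, rfl⟩)
  obtain ⟨⟨i, j⟩, hv, huniq⟩ := hc _ (mem_insert_self _ _)
  have hj : j = 0 ∨ j = 1 := by simpa [bigEdge] using hv
  rcases hj with rfl | rfl
  · exact absurd (huniq (i, 1) (by simp [bigEdge]) (hcopy i).symm) (by simp)
  · exact absurd (huniq (i, 0) (by simp [bigEdge]) (hcopy i)) (by simp)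

end Construction

theorem exists_three_regular_chiCF_gt_three_general (r : ℕ) (hr : Even r) :
    ∃ (n : ℕ) (E : Finset (Finset (Fin n))),
      (∀ v : Fin n, hypDeg E v = 3) ∧
      (∀ e ∈ E, e.card = 2 ∨ e.card = r) ∧
      (∃ e ∈ E, e.card = r) ∧
      ¬ ∃ c : Fin n → Fin 3, ConflictFree E c := by
  obtain ⟨k, rfl⟩ := hr
  have hcard : k + k = 2 * Fintype.card (Fin k) := by simp [two_mul]
  let σ : Fin k × Fin 4 ≃ Fin (k * 4) := finProdFinEquiv
  let relabel := (mapEmbedding σ.toEmbedding).toEmbedding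
  refine ⟨k * 4, (k4MinusEdgeHypergraph (Fin k)).map relabel, ?_, ?_, ?_, ?_⟩
  · intro w
    obtain ⟨v, rfl⟩ := σ.surjective w
    exact (hypDeg_map σ.toEmbedding _ v).trans (hypDeg_k4MinusEdgeHypergraph v)
  · simp only [mem_map]
    rintro _ ⟨e, he, rfl⟩
    simpa [relabel, hcard] using card_of_mem_k4MinusEdgeHypergraph he
  · exact ⟨_, mem_map_of_mem relabel (mem_insert_self _ _),
      by simp [relabel, card_bigEdge, hcard]⟩
  · rintro ⟨c, hc⟩
    exact not_conflictFree_k4MinusEdgeHypergraph (c ∘ σ)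
      (hc.comap σ.toEmbedding fun e he => mem_map_of_mem relabel he)

/-- For every even `r ≥ 2` there is a 3-regular hypergraph whose edges all
have size 2 except one edge of size `r`, with no conflict-free 3-coloring
(so `χ_cf > 3`). -/
theorem exists_three_regular_chiCF_gt_three (r : ℕ) (hr : Even r) (hr2 : 2 ≤ r) :
    ∃ (n : ℕ) (E : Finset (Finset (Fin n))),
      (∀ v : Fin n, hypDeg E v = 3) ∧
      (∀ e ∈ E, e.card = 2 ∨ e.card = r) ∧
      (∃ e ∈ E, e.card = r) ∧
      ¬ ∃ c : Fin n → Fin 3, ConflictFree E c :=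
  exists_three_regular_chiCF_gt_three_general r hr
end
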